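/- arXiv:1903.00072 — 9 statements merged into one kernel-verified Lean document; each statement's English description precedes it below -/
import Mathlib

section
/- Let Y ⊆ ℝ^N × ℝ^N be a nonempty, compact, convex set. Then there exists exactly one saddle point (p*,q*;μ̲*,μ̄*) ∈ Y × (ℝ₊^N × ℝ₊^N) of the regularized Lagrangian L_η, i.e., exactly one point satisfying L_η(p*,q*;μ̲,μ̄) ≤ L_η(p*,q*;μ̲*,μ̄*) ≤ L_η(p,q;μ̲*,μ̄*) for all (p,q) ∈ Y and all μ̲, μ̄ ∈ ℝ₊^N. -/
open scoped RealInnerProductSpace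
set_option maxHeartbeats 1000000

lemma quadle (η a μ : ℝ) (hη : 0 < η) (hμ : 0 ≤ μ) : μ * a - η/2 * μ^2 ≤ (max 0 a)^2/(2*η) := by
  rcases le_total a 0 with h | h
  · rw [max_eq_left h]
    have : μ * a ≤ 0 := mul_nonpos_of_nonneg_of_nonpos hμ h
    have h2 : (0:ℝ)^2/(2*η) = 0 := by norm_num
    rw [h2]
    nlinarith
  · rw [max_eq_right h]
    rw [← sub_nonneg]
    have h2 : a^2/(2*η) - (μ * a - η/2*μ^2) = (η*μ - a)^2/(2*η) := by field_simp; ring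
    rw [h2]; positivity

lemma quadeq (η a : ℝ) (hη : 0 < η) : (max 0 a / η) * a - η/2 * (max 0 a / η)^2 = (max 0 a)^2/(2*η) := by
  rcases le_total a 0 with h | h
  · rw [max_eq_left h]; simp
  · rw [max_eq_right h]; field_simp; ring

lemma quadmid (η a μ ν : ℝ) (hη : 0 < η) :
    (μ*a - η/2*μ^2) + (ν*a - η/2*ν^2) ≤ 2*((μ+ν)/2*a - η/2*((μ+ν)/2)^2) := by
  nlinarith [sq_nonneg (μ - ν)]

lemma quadmid_lt (η a μ ν : ℝ) (hη : 0 < η) (hne : μ ≠ ν) :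
    (μ*a - η/2*μ^2) + (ν*a - η/2*ν^2) < 2*((μ+ν)/2*a - η/2*((μ+ν)/2)^2) := by
  have h0 : μ - ν ≠ 0 := sub_ne_zero.mpr hne
  have h1 : 0 < (μ - ν)^2 := lt_of_le_of_ne (sq_nonneg _) (Ne.symm (pow_ne_zero 2 h0))
  nlinarith

-- matrix affine fact
lemma mulVec_combo {N : ℕ} (M : Matrix (Fin N) (Fin N) ℝ) (a b : ℝ)
    (p q : EuclideanSpace ℝ (Fin N)) (i : Fin N) :
    M.mulVec (a • p + b • q) i = a * M.mulVec p i + b * M.mulVec q i := by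
  simp only [Matrix.mulVec, dotProduct, Finset.mul_sum, ← Finset.sum_add_distrib]
  apply Finset.sum_congr rfl
  intro j _
  show M i j * (a * p j + b * q j) = _
  ring
/-- For a nonempty compact convex set `Y ⊆ ℝ^N × ℝ^N`, there exists
exactly one saddle point `(p*,q*;μlo*,μhi*) ∈ Y × ℝ₊^N × ℝ₊^N` of the regularized
Lagrangian `L_η`. -/
theorem stmt1 (N : ℕ) (R X : Matrix (Fin N) (Fin N) ℝ)
    (vt vlo vhi : EuclideanSpace ℝ (Fin N)) (PI η m : ℝ)
    (hη : 0 < η) (hm : 0 < m)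
    (C : Fin N → EuclideanSpace ℝ (Fin 2) → ℝ)
    (hCdiff : ∀ i, Differentiable ℝ (C i))
    (hC : ∀ i, StrongConvexOn Set.univ m (C i))
    (C0 : ℝ → ℝ) (hC0diff : Differentiable ℝ C0)
    (hC0 : ConvexOn ℝ Set.univ C0)
    (v : EuclideanSpace ℝ (Fin N) → EuclideanSpace ℝ (Fin N) → EuclideanSpace ℝ (Fin N))
    (hv : ∀ p q i, v p q i = R.mulVec p i + X.mulVec q i + vt i)
    (P0 : EuclideanSpace ℝ (Fin N) → ℝ)
    (hP0 : ∀ p, P0 p = -PI - ∑ i, p i)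
    (L : EuclideanSpace ℝ (Fin N) → EuclideanSpace ℝ (Fin N) →
         EuclideanSpace ℝ (Fin N) → EuclideanSpace ℝ (Fin N) → ℝ)
    (hL : ∀ p q μlo μhi, L p q μlo μhi =
      (∑ i, C i (WithLp.toLp 2 ![p i, q i])) + C0 (P0 p)
        + ⟪μlo, vlo - v p q⟫ + ⟪μhi, v p q - vhi⟫
        - η / 2 * (‖μlo‖ ^ 2 + ‖μhi‖ ^ 2))
    (Y : Set (EuclideanSpace ℝ (Fin N) × EuclideanSpace ℝ (Fin N)))
    (hYne : Y.Nonempty) (hYcpt : IsCompact Y) (hYconv : Convex ℝ Y) :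
    ∃! s : (EuclideanSpace ℝ (Fin N) × EuclideanSpace ℝ (Fin N)) ×
           (EuclideanSpace ℝ (Fin N) × EuclideanSpace ℝ (Fin N)),
      s.1 ∈ Y ∧ (∀ i, 0 ≤ s.2.1 i) ∧ (∀ i, 0 ≤ s.2.2 i) ∧
      (∀ μlo μhi : EuclideanSpace ℝ (Fin N), (∀ i, 0 ≤ μlo i) → (∀ i, 0 ≤ μhi i) →
        L s.1.1 s.1.2 μlo μhi ≤ L s.1.1 s.1.2 s.2.1 s.2.2) ∧
      (∀ pq ∈ Y, L s.1.1 s.1.2 s.2.1 s.2.2 ≤ L pq.1 pq.2 s.2.1 s.2.2) := by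
  classical
  have hin : ∀ x y : EuclideanSpace ℝ (Fin N), ⟪x, y⟫ = ∑ i, x i * y i := by
    intro x y; simp [PiLp.inner_apply, RCLike.inner_apply, conj_trivial, mul_comm]
  have hnorm : ∀ x : EuclideanSpace ℝ (Fin N), ‖x‖^2 = ∑ i, (x i)^2 := by
    intro x
    rw [EuclideanSpace.norm_eq, Real.sq_sqrt (by positivity)]
    simp [sq_abs]
  set glo : (EuclideanSpace ℝ (Fin N) × EuclideanSpace ℝ (Fin N)) → Fin N → ℝ :=
    fun x i => vlo i - v x.1 x.2 i with hglo_def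
  set ghi : (EuclideanSpace ℝ (Fin N) × EuclideanSpace ℝ (Fin N)) → Fin N → ℝ :=
    fun x i => v x.1 x.2 i - vhi i with hghi_def
  set F : (EuclideanSpace ℝ (Fin N) × EuclideanSpace ℝ (Fin N)) → ℝ :=
    fun x => (∑ i, C i (WithLp.toLp 2 ![x.1 i, x.2 i])) + C0 (P0 x.1) with hF_def
  have Lsum : ∀ (x : EuclideanSpace ℝ (Fin N) × EuclideanSpace ℝ (Fin N))
      (μlo μhi : EuclideanSpace ℝ (Fin N)),
      L x.1 x.2 μlo μhi = F x + (∑ i, (μlo i * glo x i - η/2 * (μlo i)^2))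
        + (∑ i, (μhi i * ghi x i - η/2 * (μhi i)^2)) := by
    intro x μlo μhi
    rw [hL, hin, hin, hnorm, hnorm]
    have e1 : ∑ i, μlo i * (vlo - v x.1 x.2) i = ∑ i, μlo i * glo x i := rfl
    have e2 : ∑ i, μhi i * (v x.1 x.2 - vhi) i = ∑ i, μhi i * ghi x i := rfl
    have e3 : ∑ i, (μlo i * glo x i - η/2 * (μlo i)^2)
        = (∑ i, μlo i * glo x i) - ∑ i, η/2 * (μlo i)^2 := Finset.sum_sub_distrib _ _
    have e4 : ∑ i, (μhi i * ghi x i - η/2 * (μhi i)^2)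
        = (∑ i, μhi i * ghi x i) - ∑ i, η/2 * (μhi i)^2 := Finset.sum_sub_distrib _ _
    have e5 : ∑ i, η/2 * (μlo i)^2 = η/2 * ∑ i, (μlo i)^2 := (Finset.mul_sum _ _ _).symm
    have e6 : ∑ i, η/2 * (μhi i)^2 = η/2 * ∑ i, (μhi i)^2 := (Finset.mul_sum _ _ _).symm
    rw [e1, e2, e3, e4, e5, e6, hF_def]
    ring
  set Mlo : (EuclideanSpace ℝ (Fin N) × EuclideanSpace ℝ (Fin N)) → EuclideanSpace ℝ (Fin N) :=
    fun x => (WithLp.toLp 2 (fun i => max 0 (glo x i) / η) : EuclideanSpace ℝ (Fin N)) with hMlo_def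
  set Mhi : (EuclideanSpace ℝ (Fin N) × EuclideanSpace ℝ (Fin N)) → EuclideanSpace ℝ (Fin N) :=
    fun x => (WithLp.toLp 2 (fun i => max 0 (ghi x i) / η) : EuclideanSpace ℝ (Fin N)) with hMhi_def
  set Phi : (EuclideanSpace ℝ (Fin N) × EuclideanSpace ℝ (Fin N)) → ℝ :=
    fun x => F x + ∑ i, ((max 0 (glo x i))^2/(2*η) + (max 0 (ghi x i))^2/(2*η)) with hPhi_def
  have hMlo_nonneg : ∀ x i, 0 ≤ Mlo x i := by
    intro x i; simp only [hMlo_def, WithLp.ofLp_toLp]; positivity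
  have hMhi_nonneg : ∀ x i, 0 ≤ Mhi x i := by
    intro x i; simp only [hMhi_def, WithLp.ofLp_toLp]; positivity
  have A1 : ∀ (x : EuclideanSpace ℝ (Fin N) × EuclideanSpace ℝ (Fin N)) (μlo μhi),
      (∀ i, 0 ≤ μlo i) → (∀ i, 0 ≤ μhi i) → L x.1 x.2 μlo μhi ≤ Phi x := by
    intro x μlo μhi h1 h2
    rw [Lsum, hPhi_def]
    have e0 : ∑ i, ((max 0 (glo x i))^2/(2*η) + (max 0 (ghi x i))^2/(2*η))
        = (∑ i, (max 0 (glo x i))^2/(2*η)) + ∑ i, (max 0 (ghi x i))^2/(2*η) :=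
      Finset.sum_add_distrib
    simp only [e0]
    have i1 : ∑ i, (μlo i * glo x i - η/2 * (μlo i)^2) ≤ ∑ i, (max 0 (glo x i))^2/(2*η) :=
      Finset.sum_le_sum fun i _ => quadle η (glo x i) (μlo i) hη (h1 i)
    have i2 : ∑ i, (μhi i * ghi x i - η/2 * (μhi i)^2) ≤ ∑ i, (max 0 (ghi x i))^2/(2*η) :=
      Finset.sum_le_sum fun i _ => quadle η (ghi x i) (μhi i) hη (h2 i)
    linarith
  have A2 : ∀ (x : EuclideanSpace ℝ (Fin N) × EuclideanSpace ℝ (Fin N)),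
      L x.1 x.2 (Mlo x) (Mhi x) = Phi x := by
    intro x
    rw [Lsum, hPhi_def]
    have e0 : ∑ i, ((max 0 (glo x i))^2/(2*η) + (max 0 (ghi x i))^2/(2*η))
        = (∑ i, (max 0 (glo x i))^2/(2*η)) + ∑ i, (max 0 (ghi x i))^2/(2*η) :=
      Finset.sum_add_distrib
    simp only [e0]
    have i1 : ∑ i, (Mlo x i * glo x i - η/2 * (Mlo x i)^2) = ∑ i, (max 0 (glo x i))^2/(2*η) :=
      Finset.sum_congr rfl fun i _ => by
        simp only [hMlo_def]
        exact quadeq η (glo x i) hη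
    have i2 : ∑ i, (Mhi x i * ghi x i - η/2 * (Mhi x i)^2) = ∑ i, (max 0 (ghi x i))^2/(2*η) :=
      Finset.sum_congr rfl fun i _ => by
        simp only [hMhi_def]
        exact quadeq η (ghi x i) hη
    rw [i1, i2]; ring
  -- affine identities
  have hvaff : ∀ (a b : ℝ), a + b = 1 →
      ∀ (x y : EuclideanSpace ℝ (Fin N) × EuclideanSpace ℝ (Fin N)) (i : Fin N),
      v (a • x + b • y).1 (a • x + b • y).2 i = a * v x.1 x.2 i + b * v y.1 y.2 i := by
    intro a b hab x y i
    have h1 : (a • x + b • y).1 = a • x.1 + b • y.1 := rfl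
    have h2 : (a • x + b • y).2 = a • x.2 + b • y.2 := rfl
    rw [h1, h2, hv, hv, hv, WithLp.ofLp_add, WithLp.ofLp_add, WithLp.ofLp_smul, WithLp.ofLp_smul,
      WithLp.ofLp_smul, WithLp.ofLp_smul, mulVec_combo, mulVec_combo]
    linear_combination (vt i) * hab.symm
  have hgloaff : ∀ (a b : ℝ), a + b = 1 →
      ∀ (x y : EuclideanSpace ℝ (Fin N) × EuclideanSpace ℝ (Fin N)) (i : Fin N),
      glo (a • x + b • y) i = a * glo x i + b * glo y i := by
    intro a b hab x y i
    simp only [hglo_def]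
    rw [hvaff a b hab]
    linear_combination (vlo i) * hab.symm
  have hghiaff : ∀ (a b : ℝ), a + b = 1 →
      ∀ (x y : EuclideanSpace ℝ (Fin N) × EuclideanSpace ℝ (Fin N)) (i : Fin N),
      ghi (a • x + b • y) i = a * ghi x i + b * ghi y i := by
    intro a b hab x y i
    simp only [hghi_def]
    rw [hvaff a b hab]
    have hb1 : b = 1 - a := by linarith
    rw [hb1]; ring
  have hP0aff : ∀ (a b : ℝ), a + b = 1 → ∀ (p q : EuclideanSpace ℝ (Fin N)),
      P0 (a • p + b • q) = a * P0 p + b * P0 q := by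
    intro a b hab p q
    rw [hP0, hP0, hP0]
    have e1 : ∑ i, (a • p + b • q) i = ∑ i, (a * p i + b * q i) :=
      Finset.sum_congr rfl fun i _ => rfl
    rw [e1, Finset.sum_add_distrib, ← Finset.mul_sum, ← Finset.mul_sum]
    linear_combination (-PI) * hab.symm
  have hveccomb : ∀ (a b : ℝ) (x y : EuclideanSpace ℝ (Fin N) × EuclideanSpace ℝ (Fin N)) (i : Fin N),
      ((WithLp.toLp 2 ![(a • x + b • y).1 i, (a • x + b • y).2 i]) : EuclideanSpace ℝ (Fin 2))
        = a • (WithLp.toLp 2 ![x.1 i, x.2 i]) + b • (WithLp.toLp 2 ![y.1 i, y.2 i]) := by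
    intro a b x y i
    ext j
    fin_cases j <;> rfl
  have hCc : ∀ i, ConvexOn ℝ Set.univ (C i) := fun i => ((hC i).strictConvexOn hm).convexOn
  have hCs : ∀ i, StrictConvexOn ℝ Set.univ (C i) := fun i => (hC i).strictConvexOn hm
  -- convexity of L in x
  have hFconv : ∀ (a b : ℝ), 0 ≤ a → 0 ≤ b → a + b = 1 →
      ∀ (x y : EuclideanSpace ℝ (Fin N) × EuclideanSpace ℝ (Fin N)),
      F (a • x + b • y) ≤ a * F x + b * F y := by
    intro a b ha hb hab x y
    simp only [hF_def]
    have h1 : ∑ i, C i (WithLp.toLp 2 ![(a • x + b • y).1 i, (a • x + b • y).2 i])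
        ≤ ∑ i, (a * C i (WithLp.toLp 2 ![x.1 i, x.2 i]) + b * C i (WithLp.toLp 2 ![y.1 i, y.2 i])) := by
      apply Finset.sum_le_sum
      intro i _
      rw [hveccomb]
      have := (hCc i).2 (Set.mem_univ ((WithLp.toLp 2 ![x.1 i, x.2 i]) : EuclideanSpace ℝ (Fin 2)))
        (Set.mem_univ ((WithLp.toLp 2 ![y.1 i, y.2 i]) : EuclideanSpace ℝ (Fin 2))) ha hb hab
      simpa only [smul_eq_mul] using this
    have h2 : C0 (P0 (a • x + b • y).1) ≤ a * C0 (P0 x.1) + b * C0 (P0 y.1) := by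
      have e : (a • x + b • y).1 = a • x.1 + b • y.1 := rfl
      rw [e, hP0aff a b hab]
      have := hC0.2 (Set.mem_univ (P0 x.1)) (Set.mem_univ (P0 y.1)) ha hb hab
      simpa only [smul_eq_mul] using this
    rw [Finset.sum_add_distrib, ← Finset.mul_sum, ← Finset.mul_sum] at h1
    linarith
  have hμsumaff : ∀ (a b : ℝ), a + b = 1 →
      ∀ (x y : EuclideanSpace ℝ (Fin N) × EuclideanSpace ℝ (Fin N))
        (g : (EuclideanSpace ℝ (Fin N) × EuclideanSpace ℝ (Fin N)) → Fin N → ℝ),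
      (∀ i, g (a • x + b • y) i = a * g x i + b * g y i) →
      ∀ (μ : EuclideanSpace ℝ (Fin N)),
      ∑ i, (μ i * g (a • x + b • y) i - η/2 * (μ i)^2)
        = a * (∑ i, (μ i * g x i - η/2 * (μ i)^2)) + b * (∑ i, (μ i * g y i - η/2 * (μ i)^2)) := by
    intro a b hab x y g hg μ
    rw [Finset.mul_sum, Finset.mul_sum, ← Finset.sum_add_distrib]
    apply Finset.sum_congr rfl
    intro i _
    rw [hg i]
    have hb1 : b = 1 - a := by linarith
    rw [hb1]; ring
  have hconv : ∀ (a b : ℝ), 0 ≤ a → 0 ≤ b → a + b = 1 →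
      ∀ (x y : EuclideanSpace ℝ (Fin N) × EuclideanSpace ℝ (Fin N)) (μlo μhi),
      L (a • x + b • y).1 (a • x + b • y).2 μlo μhi
        ≤ a * L x.1 x.2 μlo μhi + b * L y.1 y.2 μlo μhi := by
    intro a b ha hb hab x y μlo μhi
    rw [Lsum (a • x + b • y), Lsum x, Lsum y]
    have e1 := hμsumaff a b hab x y glo (fun i => hgloaff a b hab x y i) μlo
    have e2 := hμsumaff a b hab x y ghi (fun i => hghiaff a b hab x y i) μhi
    have e3 := hFconv a b ha hb hab x y
    rw [e1, e2]
    set s1x := ∑ i, (μlo i * glo x i - η/2 * (μlo i)^2) with hs1x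
    set s1y := ∑ i, (μlo i * glo y i - η/2 * (μlo i)^2) with hs1y
    set s2x := ∑ i, (μhi i * ghi x i - η/2 * (μhi i)^2) with hs2x
    set s2y := ∑ i, (μhi i * ghi y i - η/2 * (μhi i)^2) with hs2y
    calc F (a • x + b • y) + (a * s1x + b * s1y) + (a * s2x + b * s2y)
        ≤ (a * F x + b * F y) + (a * s1x + b * s1y) + (a * s2x + b * s2y) := by linarith [e3]
      _ = a * (F x + s1x + s2x) + b * (F y + s1y + s2y) := by ring
  -- strict convexity in x
  have hconvlt : ∀ (x y : EuclideanSpace ℝ (Fin N) × EuclideanSpace ℝ (Fin N)), x ≠ y →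
      ∀ μlo μhi, L ((1/2:ℝ) • x + (1/2:ℝ) • y).1 ((1/2:ℝ) • x + (1/2:ℝ) • y).2 μlo μhi
        < 1/2 * L x.1 x.2 μlo μhi + 1/2 * L y.1 y.2 μlo μhi := by
    intro x y hne μlo μhi
    have hex : ∃ i : Fin N, ((WithLp.toLp 2 ![x.1 i, x.2 i]) : EuclideanSpace ℝ (Fin 2)) ≠ (WithLp.toLp 2 ![y.1 i, y.2 i]) := by
      by_contra h
      push_neg at h
      apply hne
      have h1 : x.1 = y.1 := by ext i; exact congrFun (congrArg WithLp.ofLp (h i)) 0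
      have h2 : x.2 = y.2 := by ext i; exact congrFun (congrArg WithLp.ofLp (h i)) 1
      exact Prod.ext h1 h2
    obtain ⟨i0, hi0⟩ := hex
    have ha : (0:ℝ) ≤ 1/2 := by norm_num
    have hab : (1/2:ℝ) + 1/2 = 1 := by norm_num
    have h1 : ∑ i, C i (WithLp.toLp 2 ![((1/2:ℝ) • x + (1/2:ℝ) • y).1 i, ((1/2:ℝ) • x + (1/2:ℝ) • y).2 i])
        < ∑ i, (1/2 * C i (WithLp.toLp 2 ![x.1 i, x.2 i]) + 1/2 * C i (WithLp.toLp 2 ![y.1 i, y.2 i])) := by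
      apply Finset.sum_lt_sum
      · intro i _
        rw [hveccomb]
        have := (hCc i).2 (Set.mem_univ ((WithLp.toLp 2 ![x.1 i, x.2 i]) : EuclideanSpace ℝ (Fin 2)))
          (Set.mem_univ ((WithLp.toLp 2 ![y.1 i, y.2 i]) : EuclideanSpace ℝ (Fin 2))) ha ha hab
        simpa only [smul_eq_mul] using this
      · refine ⟨i0, Finset.mem_univ i0, ?_⟩
        rw [hveccomb]
        have := (hCs i0).2 (Set.mem_univ ((WithLp.toLp 2 ![x.1 i0, x.2 i0]) : EuclideanSpace ℝ (Fin 2)))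
          (Set.mem_univ ((WithLp.toLp 2 ![y.1 i0, y.2 i0]) : EuclideanSpace ℝ (Fin 2))) hi0
          (by norm_num) (by norm_num) hab
        simpa only [smul_eq_mul] using this
    have h2 : C0 (P0 ((1/2:ℝ) • x + (1/2:ℝ) • y).1) ≤ 1/2 * C0 (P0 x.1) + 1/2 * C0 (P0 y.1) := by
      have e : ((1/2:ℝ) • x + (1/2:ℝ) • y).1 = (1/2:ℝ) • x.1 + (1/2:ℝ) • y.1 := rfl
      rw [e, hP0aff (1/2) (1/2) hab]
      have := hC0.2 (Set.mem_univ (P0 x.1)) (Set.mem_univ (P0 y.1)) ha ha hab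
      simpa only [smul_eq_mul] using this
    have hFlt : F ((1/2:ℝ) • x + (1/2:ℝ) • y) < 1/2 * F x + 1/2 * F y := by
      simp only [hF_def]
      rw [Finset.sum_add_distrib, ← Finset.mul_sum, ← Finset.mul_sum] at h1
      linarith
    rw [Lsum ((1/2:ℝ) • x + (1/2:ℝ) • y), Lsum x, Lsum y]
    have e1 := hμsumaff (1/2) (1/2) hab x y glo (fun i => hgloaff (1/2) (1/2) hab x y i) μlo
    have e2 := hμsumaff (1/2) (1/2) hab x y ghi (fun i => hghiaff (1/2) (1/2) hab x y i) μhi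
    rw [e1, e2]
    set s1x := ∑ i, (μlo i * glo x i - η/2 * (μlo i)^2) with hs1x
    set s1y := ∑ i, (μlo i * glo y i - η/2 * (μlo i)^2) with hs1y
    set s2x := ∑ i, (μhi i * ghi x i - η/2 * (μhi i)^2) with hs2x
    set s2y := ∑ i, (μhi i * ghi y i - η/2 * (μhi i)^2) with hs2y
    calc F ((1/2:ℝ) • x + (1/2:ℝ) • y) + ((1/2) * s1x + (1/2) * s1y) + ((1/2) * s2x + (1/2) * s2y)
        < (1/2 * F x + 1/2 * F y) + ((1/2) * s1x + (1/2) * s1y) + ((1/2) * s2x + (1/2) * s2y) := by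
          linarith [hFlt]
      _ = 1/2 * (F x + s1x + s2x) + 1/2 * (F y + s1y + s2y) := by ring
  -- continuity
  have hcoord1 : ∀ j : Fin N,
      Continuous fun x : EuclideanSpace ℝ (Fin N) × EuclideanSpace ℝ (Fin N) => x.1 j := by
    intro j; fun_prop
  have hcoord2 : ∀ j : Fin N,
      Continuous fun x : EuclideanSpace ℝ (Fin N) × EuclideanSpace ℝ (Fin N) => x.2 j := by
    intro j; fun_prop
  have hvcont : ∀ i : Fin N,
      Continuous fun x : EuclideanSpace ℝ (Fin N) × EuclideanSpace ℝ (Fin N) => v x.1 x.2 i := by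
    intro i
    have e : (fun x : EuclideanSpace ℝ (Fin N) × EuclideanSpace ℝ (Fin N) => v x.1 x.2 i)
        = fun x => (∑ j, R i j * x.1 j) + (∑ j, X i j * x.2 j) + vt i := by
      funext x
      rw [hv]
      simp [Matrix.mulVec, dotProduct]
    rw [e]
    exact ((continuous_finset_sum _ fun j _ => continuous_const.mul (hcoord1 j)).add
      (continuous_finset_sum _ fun j _ => continuous_const.mul (hcoord2 j))).add continuous_const
  have hglocont : ∀ i : Fin N,
      Continuous fun x : EuclideanSpace ℝ (Fin N) × EuclideanSpace ℝ (Fin N) => glo x i :=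
    fun i => continuous_const.sub (hvcont i)
  have hghicont : ∀ i : Fin N,
      Continuous fun x : EuclideanSpace ℝ (Fin N) × EuclideanSpace ℝ (Fin N) => ghi x i :=
    fun i => (hvcont i).sub continuous_const
  have hveccont : ∀ i : Fin N,
      Continuous fun x : EuclideanSpace ℝ (Fin N) × EuclideanSpace ℝ (Fin N) =>
        ((WithLp.toLp 2 ![x.1 i, x.2 i]) : EuclideanSpace ℝ (Fin 2)) := by
    intro i
    apply (PiLp.continuous_toLp ..).comp
    apply continuous_pi
    intro j
    fin_cases j
    · exact hcoord1 i
    · exact hcoord2 i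
  have hP0cont : Continuous fun x : EuclideanSpace ℝ (Fin N) × EuclideanSpace ℝ (Fin N) => P0 x.1 := by
    have e : (fun x : EuclideanSpace ℝ (Fin N) × EuclideanSpace ℝ (Fin N) => P0 x.1)
        = fun x => -PI - ∑ i, x.1 i := by
      funext x; rw [hP0]
    rw [e]
    exact continuous_const.sub (continuous_finset_sum _ fun i _ => hcoord1 i)
  have hFcont : Continuous F := by
    rw [hF_def]
    exact (continuous_finset_sum _ fun i _ => (hCdiff i).continuous.comp (hveccont i)).add
      (hC0diff.continuous.comp hP0cont)
  have hPhicont : Continuous Phi := by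
    rw [hPhi_def]
    exact hFcont.add (continuous_finset_sum _ fun i _ =>
      (((continuous_const.max (hglocont i)).pow 2).div_const _).add
        (((continuous_const.max (hghicont i)).pow 2).div_const _))
  obtain ⟨xs, hxsY, hxsmin0⟩ := hYcpt.exists_isMinOn hYne hPhicont.continuousOn
  have hxsmin : ∀ z ∈ Y, Phi xs ≤ Phi z := fun z hz => isMinOn_iff.mp hxsmin0 z hz
  -- the saddle min part via limit argument
  have hminpart : ∀ pq ∈ Y, Phi xs ≤ L pq.1 pq.2 (Mlo xs) (Mhi xs) := by
    intro pq hpq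
    have key : ∀ t : ℝ, 0 < t → t ≤ 1 →
        Phi xs ≤ L pq.1 pq.2 (Mlo ((1-t) • xs + t • pq)) (Mhi ((1-t) • xs + t • pq)) := by
      intro t ht0 ht1
      have hzY : (1-t) • xs + t • pq ∈ Y := hYconv hxsY hpq (by linarith) (le_of_lt ht0) (by ring)
      have h1 : Phi xs ≤ Phi ((1-t) • xs + t • pq) := hxsmin _ hzY
      have h2 : Phi ((1-t) • xs + t • pq)
          = L ((1-t) • xs + t • pq).1 ((1-t) • xs + t • pq).2
              (Mlo ((1-t) • xs + t • pq)) (Mhi ((1-t) • xs + t • pq)) := (A2 _).symm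
      have h3 := hconv (1-t) t (by linarith) (le_of_lt ht0) (by ring) xs pq
        (Mlo ((1-t) • xs + t • pq)) (Mhi ((1-t) • xs + t • pq))
      have h4 : L xs.1 xs.2 (Mlo ((1-t) • xs + t • pq)) (Mhi ((1-t) • xs + t • pq)) ≤ Phi xs :=
        A1 xs _ _ (hMlo_nonneg _) (hMhi_nonneg _)
      have h4' : (1-t) * L xs.1 xs.2 (Mlo ((1-t) • xs + t • pq)) (Mhi ((1-t) • xs + t • pq))
          ≤ (1-t) * Phi xs := mul_le_mul_of_nonneg_left h4 (by linarith)
      have h5 : Phi xs ≤ (1-t) * Phi xs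
          + t * L pq.1 pq.2 (Mlo ((1-t) • xs + t • pq)) (Mhi ((1-t) • xs + t • pq)) := by
        linarith
      have h6 : t * Phi xs ≤ t * L pq.1 pq.2 (Mlo ((1-t) • xs + t • pq)) (Mhi ((1-t) • xs + t • pq)) := by
        linarith
      exact le_of_mul_le_mul_left h6 ht0
    have hfeq : (fun t : ℝ => L pq.1 pq.2 (Mlo ((1-t) • xs + t • pq)) (Mhi ((1-t) • xs + t • pq)))
        = fun t => F pq
          + (∑ i, (max 0 ((1-t) * glo xs i + t * glo pq i)/η * glo pq i
              - η/2 * (max 0 ((1-t) * glo xs i + t * glo pq i)/η)^2))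
          + (∑ i, (max 0 ((1-t) * ghi xs i + t * ghi pq i)/η * ghi pq i
              - η/2 * (max 0 ((1-t) * ghi xs i + t * ghi pq i)/η)^2)) := by
      funext t
      rw [Lsum pq]
      have e1 : ∀ i, Mlo ((1-t) • xs + t • pq) i = max 0 ((1-t) * glo xs i + t * glo pq i)/η := by
        intro i
        simp only [hMlo_def]
        rw [hgloaff (1-t) t (by ring) xs pq i]
      have e2 : ∀ i, Mhi ((1-t) • xs + t • pq) i = max 0 ((1-t) * ghi xs i + t * ghi pq i)/η := by
        intro i
        simp only [hMhi_def]
        rw [hghiaff (1-t) t (by ring) xs pq i]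
      have s1 : ∑ i, (Mlo ((1-t) • xs + t • pq) i * glo pq i
            - η/2 * (Mlo ((1-t) • xs + t • pq) i)^2)
          = ∑ i, (max 0 ((1-t) * glo xs i + t * glo pq i)/η * glo pq i
              - η/2 * (max 0 ((1-t) * glo xs i + t * glo pq i)/η)^2) :=
        Finset.sum_congr rfl fun i _ => by rw [e1 i]
      have s2 : ∑ i, (Mhi ((1-t) • xs + t • pq) i * ghi pq i
            - η/2 * (Mhi ((1-t) • xs + t • pq) i)^2)
          = ∑ i, (max 0 ((1-t) * ghi xs i + t * ghi pq i)/η * ghi pq i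
              - η/2 * (max 0 ((1-t) * ghi xs i + t * ghi pq i)/η)^2) :=
        Finset.sum_congr rfl fun i _ => by rw [e2 i]
      rw [s1, s2]
    have hfc : Continuous (fun t : ℝ =>
        L pq.1 pq.2 (Mlo ((1-t) • xs + t • pq)) (Mhi ((1-t) • xs + t • pq))) := by
      rw [hfeq]
      apply Continuous.add
      apply Continuous.add
      · exact continuous_const
      · apply continuous_finset_sum
        intro i _
        have hb : Continuous fun t : ℝ => max 0 ((1-t) * glo xs i + t * glo pq i)/η :=
          (continuous_const.max (by fun_prop)).div_const _
        exact (hb.mul continuous_const).sub (continuous_const.mul (hb.pow 2))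
      · apply continuous_finset_sum
        intro i _
        have hb : Continuous fun t : ℝ => max 0 ((1-t) * ghi xs i + t * ghi pq i)/η :=
          (continuous_const.max (by fun_prop)).div_const _
        exact (hb.mul continuous_const).sub (continuous_const.mul (hb.pow 2))
    have hz0 : ((1-(0:ℝ)) • xs + (0:ℝ) • pq) = xs := by
      simp
    have hlim : Filter.Tendsto
        (fun n : ℕ => L pq.1 pq.2 (Mlo ((1-(1/((n:ℝ)+1))) • xs + (1/((n:ℝ)+1)) • pq))
          (Mhi ((1-(1/((n:ℝ)+1))) • xs + (1/((n:ℝ)+1)) • pq)))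
        Filter.atTop (nhds (L pq.1 pq.2 (Mlo ((1-(0:ℝ)) • xs + (0:ℝ) • pq))
          (Mhi ((1-(0:ℝ)) • xs + (0:ℝ) • pq)))) :=
      (hfc.tendsto 0).comp tendsto_one_div_add_atTop_nhds_zero_nat
    rw [hz0] at hlim
    refine ge_of_tendsto hlim (Filter.Eventually.of_forall fun n => ?_)
    refine key (1/((n:ℝ)+1)) (by positivity) ?_
    rw [div_le_one (by positivity)]
    linarith [Nat.cast_nonneg (α := ℝ) n]
  refine ⟨⟨xs, Mlo xs, Mhi xs⟩, ⟨hxsY, fun i => hMlo_nonneg xs i, fun i => hMhi_nonneg xs i, ?_, ?_⟩, ?_⟩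
  · intro μlo μhi h1 h2
    calc L xs.1 xs.2 μlo μhi ≤ Phi xs := A1 xs μlo μhi h1 h2
      _ = L xs.1 xs.2 (Mlo xs) (Mhi xs) := (A2 xs).symm
  · intro pq hpq
    calc L xs.1 xs.2 (Mlo xs) (Mhi xs) = Phi xs := A2 xs
      _ ≤ L pq.1 pq.2 (Mlo xs) (Mhi xs) := hminpart pq hpq
  · rintro ⟨sx, sμlo, sμhi⟩ ⟨hsY, hslo, hshi, hsmax, hsmin⟩
    dsimp only at hsY hslo hshi hsmax hsmin ⊢
    have hLxs_eq : L sx.1 sx.2 sμlo sμhi = L xs.1 xs.2 sμlo sμhi := by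
      have c1 : L sx.1 sx.2 sμlo sμhi ≤ L xs.1 xs.2 sμlo sμhi := hsmin xs hxsY
      have c2 : L xs.1 xs.2 sμlo sμhi ≤ L xs.1 xs.2 (Mlo xs) (Mhi xs) := by
        calc L xs.1 xs.2 sμlo sμhi ≤ Phi xs := A1 xs _ _ hslo hshi
          _ = L xs.1 xs.2 (Mlo xs) (Mhi xs) := (A2 xs).symm
      have c3 : L xs.1 xs.2 (Mlo xs) (Mhi xs) ≤ L sx.1 sx.2 (Mlo xs) (Mhi xs) := by
        calc L xs.1 xs.2 (Mlo xs) (Mhi xs) = Phi xs := A2 xs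
          _ ≤ L sx.1 sx.2 (Mlo xs) (Mhi xs) := hminpart sx hsY
      have c4 : L sx.1 sx.2 (Mlo xs) (Mhi xs) ≤ L sx.1 sx.2 sμlo sμhi :=
        hsmax (Mlo xs) (Mhi xs) (hMlo_nonneg xs) (hMhi_nonneg xs)
      linarith
    have hxeq : sx = xs := by
      by_contra hne
      have hmidY : (1/2:ℝ) • sx + (1/2:ℝ) • xs ∈ Y :=
        hYconv hsY hxsY (by norm_num) (by norm_num) (by norm_num)
      have hlt := hconvlt sx xs hne sμlo sμhi
      have hge := hsmin ((1/2:ℝ) • sx + (1/2:ℝ) • xs) hmidY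
      linarith
    subst hxeq
    have hμup : L sx.1 sx.2 sμlo sμhi = L sx.1 sx.2 (Mlo sx) (Mhi sx) := by
      have c2 : L sx.1 sx.2 sμlo sμhi ≤ L sx.1 sx.2 (Mlo sx) (Mhi sx) := by
        calc L sx.1 sx.2 sμlo sμhi ≤ Phi sx := A1 sx _ _ hslo hshi
          _ = L sx.1 sx.2 (Mlo sx) (Mhi sx) := (A2 sx).symm
      have c4 : L sx.1 sx.2 (Mlo sx) (Mhi sx) ≤ L sx.1 sx.2 sμlo sμhi :=
        hsmax (Mlo sx) (Mhi sx) (hMlo_nonneg sx) (hMhi_nonneg sx)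
      linarith
    have hloeq : sμlo = Mlo sx ∧ sμhi = Mhi sx := by
      by_contra hcon
      set νlo : EuclideanSpace ℝ (Fin N) :=
        (WithLp.toLp 2 (fun i => (sμlo i + Mlo sx i)/2) : EuclideanSpace ℝ (Fin N)) with hνlo
      set νhi : EuclideanSpace ℝ (Fin N) :=
        (WithLp.toLp 2 (fun i => (sμhi i + Mhi sx i)/2) : EuclideanSpace ℝ (Fin N)) with hνhi
      have hνlo_nonneg : ∀ i, 0 ≤ νlo i := by
        intro i
        have h1 := hslo i
        have h2 := hMlo_nonneg sx i
        simp only [hνlo, WithLp.ofLp_toLp]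
        positivity
      have hνhi_nonneg : ∀ i, 0 ≤ νhi i := by
        intro i
        have h1 := hshi i
        have h2 := hMhi_nonneg sx i
        simp only [hνhi, WithLp.ofLp_toLp]
        positivity
      have hle1 : ∀ i : Fin N, i ∈ Finset.univ →
          (sμlo i * glo sx i - η/2*(sμlo i)^2) + (Mlo sx i * glo sx i - η/2*(Mlo sx i)^2)
            ≤ 2*(νlo i * glo sx i - η/2*(νlo i)^2) := by
        intro i _
        simp only [hνlo]
        exact quadmid η (glo sx i) (sμlo i) (Mlo sx i) hη
      have hle2 : ∀ i : Fin N, i ∈ Finset.univ →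
          (sμhi i * ghi sx i - η/2*(sμhi i)^2) + (Mhi sx i * ghi sx i - η/2*(Mhi sx i)^2)
            ≤ 2*(νhi i * ghi sx i - η/2*(νhi i)^2) := by
        intro i _
        simp only [hνhi]
        exact quadmid η (ghi sx i) (sμhi i) (Mhi sx i) hη
      have hsum : L sx.1 sx.2 sμlo sμhi + L sx.1 sx.2 (Mlo sx) (Mhi sx)
          < 2 * L sx.1 sx.2 νlo νhi := by
        rw [Lsum sx sμlo sμhi, Lsum sx (Mlo sx) (Mhi sx), Lsum sx νlo νhi]
        have glue1 : ∑ i, (sμlo i * glo sx i - η/2*(sμlo i)^2)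
            + ∑ i, (Mlo sx i * glo sx i - η/2*(Mlo sx i)^2)
            = ∑ i, ((sμlo i * glo sx i - η/2*(sμlo i)^2)
              + (Mlo sx i * glo sx i - η/2*(Mlo sx i)^2)) := Finset.sum_add_distrib.symm
        have glue2 : ∑ i, (sμhi i * ghi sx i - η/2*(sμhi i)^2)
            + ∑ i, (Mhi sx i * ghi sx i - η/2*(Mhi sx i)^2)
            = ∑ i, ((sμhi i * ghi sx i - η/2*(sμhi i)^2)
              + (Mhi sx i * ghi sx i - η/2*(Mhi sx i)^2)) := Finset.sum_add_distrib.symm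
        have glue3 : 2 * ∑ i, (νlo i * glo sx i - η/2*(νlo i)^2)
            = ∑ i, 2*(νlo i * glo sx i - η/2*(νlo i)^2) := Finset.mul_sum _ _ _
        have glue4 : 2 * ∑ i, (νhi i * ghi sx i - η/2*(νhi i)^2)
            = ∑ i, 2*(νhi i * ghi sx i - η/2*(νhi i)^2) := Finset.mul_sum _ _ _
        rcases not_and_or.mp hcon with h | h
        · obtain ⟨i0, hi0⟩ := Function.ne_iff.mp (fun he => h (WithLp.ofLp_injective 2 he))
          have hlt1 : ∑ i, ((sμlo i * glo sx i - η/2*(sμlo i)^2)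
                + (Mlo sx i * glo sx i - η/2*(Mlo sx i)^2))
              < ∑ i, 2*(νlo i * glo sx i - η/2*(νlo i)^2) := by
            apply Finset.sum_lt_sum hle1
            refine ⟨i0, Finset.mem_univ i0, ?_⟩
            simp only [hνlo]
            exact quadmid_lt η (glo sx i0) (sμlo i0) (Mlo sx i0) hη hi0
          have hge2 : ∑ i, ((sμhi i * ghi sx i - η/2*(sμhi i)^2)
                + (Mhi sx i * ghi sx i - η/2*(Mhi sx i)^2))
              ≤ ∑ i, 2*(νhi i * ghi sx i - η/2*(νhi i)^2) := Finset.sum_le_sum hle2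
          linarith [glue1, glue2, glue3, glue4]
        · obtain ⟨i0, hi0⟩ := Function.ne_iff.mp (fun he => h (WithLp.ofLp_injective 2 he))
          have hlt2 : ∑ i, ((sμhi i * ghi sx i - η/2*(sμhi i)^2)
                + (Mhi sx i * ghi sx i - η/2*(Mhi sx i)^2))
              < ∑ i, 2*(νhi i * ghi sx i - η/2*(νhi i)^2) := by
            apply Finset.sum_lt_sum hle2
            refine ⟨i0, Finset.mem_univ i0, ?_⟩
            simp only [hνhi]
            exact quadmid_lt η (ghi sx i0) (sμhi i0) (Mhi sx i0) hη hi0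
          have hge1 : ∑ i, ((sμlo i * glo sx i - η/2*(sμlo i)^2)
                + (Mlo sx i * glo sx i - η/2*(Mlo sx i)^2))
              ≤ ∑ i, 2*(νlo i * glo sx i - η/2*(νlo i)^2) := Finset.sum_le_sum hle1
          linarith [glue1, glue2, glue3, glue4]
      have hcontra : L sx.1 sx.2 νlo νhi ≤ L sx.1 sx.2 sμlo sμhi :=
        hsmax νlo νhi hνlo_nonneg hνhi_nonneg
      linarith [hμup]
    obtain ⟨h1, h2⟩ := hloeq
    rw [h1, h2]
end

section
/- The primal-dual gradient operator T : ℝ^{4N} → ℝ^{4N} defined by T(p,q,μ̲,μ̄) := ( (∂_{p_i}C_i(p_i,q_i))_{i=1}^N − C₀'(P₀(p))·1_N + Rᵀ(μ̄ − μ̲), (∂_{q_i}C_i(p_i,q_i))_{i=1}^N + Xᵀ(μ̄ − μ̲), v(p,q) − v̲ + η μ̲, v̄ − v(p,q) + η μ̄ ) is strongly monotone on ℝ^{4N} with constant min(m, η): for all z, z' ∈ ℝ^{4N}, ⟨T(z) − T(z'), z − z'⟩ ≥ min(m, η)·‖z − z'‖². -/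
open scoped RealInnerProductSpace

lemma grad_mono {E : Type*} [NormedAddCommGroup E] [InnerProductSpace ℝ E] [CompleteSpace E]
    {f : E → ℝ} (hd : Differentiable ℝ f) (hc : ConvexOn ℝ Set.univ f) (x y : E) :
    ⟪gradient f x, y - x⟫ ≤ ⟪gradient f y, y - x⟫ := by
  set g : ℝ → ℝ := fun t => f (x + t • (y - x)) with hg
  have hcurve : ∀ t : ℝ, HasDerivAt (fun t : ℝ => x + t • (y - x)) (y - x) t := by
    intro t
    simpa using ((hasDerivAt_id t).smul_const (y - x)).const_add x
  have hgd : ∀ t : ℝ, HasDerivAt g ⟪gradient f (x + t • (y - x)), y - x⟫ t := by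
    intro t
    have h1 : HasGradientAt f (gradient f (x + t • (y - x))) (x + t • (y - x)) :=
      (hd _).hasGradientAt
    have h2 := (hasGradientAt_iff_hasFDerivAt.mp h1).comp_hasDerivAt t (hcurve t)
    rw [InnerProductSpace.toDual_apply_apply] at h2
    exact h2
  have hgc : ConvexOn ℝ Set.univ g := by
    have := hc.comp_affineMap (AffineMap.lineMap x y : ℝ →ᵃ[ℝ] E)
    simp only [Set.preimage_univ] at this
    suffices hfun : g = f ∘ ⇑(AffineMap.lineMap x y : ℝ →ᵃ[ℝ] E) by rw [hfun]; exact this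
    funext t
    simp [g, AffineMap.lineMap_apply, add_comm]
  have hmono := hgc.monotoneOn_deriv (fun t _ => ((hgd t).differentiableAt))
  have := hmono (Set.mem_univ (0:ℝ)) (Set.mem_univ (1:ℝ)) zero_le_one
  rw [(hgd 0).deriv, (hgd 1).deriv] at this
  simpa using this

lemma strong_grad_mono {E : Type*} [NormedAddCommGroup E] [InnerProductSpace ℝ E] [CompleteSpace E]
    {f : E → ℝ} {m : ℝ} (hd : Differentiable ℝ f) (hc : StrongConvexOn Set.univ m f) (x y : E) :
    m * ‖y - x‖ ^ 2 ≤ ⟪gradient f y - gradient f x, y - x⟫ := by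
  set g : E → ℝ := fun w => f w - m / 2 * ‖w‖ ^ 2 with hgdef
  have hgconv : ConvexOn ℝ Set.univ g := strongConvexOn_iff_convex.mp hc
  have hinner : Differentiable ℝ fun w : E => m / 2 * ⟪w, w⟫ :=
    (differentiable_id.inner ℝ differentiable_id).const_mul _
  have hgeq : g = fun w => f w - m / 2 * ⟪w, w⟫ := by
    funext w; simp [g, real_inner_self_eq_norm_sq]
  have hgd : Differentiable ℝ g := by rw [hgeq]; exact hd.sub hinner
  have hn : ∀ z : E, HasFDerivAt (fun w : E => m / 2 * ⟪w, w⟫)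
      (InnerProductSpace.toDual ℝ E (m • z)) z := by
    intro z
    have h := ((hasFDerivAt_id (𝕜 := ℝ) z).inner ℝ (hasFDerivAt_id z)).const_mul (m / 2)
    refine h.congr_fderiv ?_
    ext w
    simp [real_inner_smul_left, real_inner_comm z w]
    ring
  have hgrad : ∀ z : E, gradient g z = gradient f z - m • z := by
    intro z
    have hfd : HasFDerivAt f (InnerProductSpace.toDual ℝ E (gradient f z)) z :=
      hasGradientAt_iff_hasFDerivAt.mp (hd z).hasGradientAt
    have : HasFDerivAt g (InnerProductSpace.toDual ℝ E (gradient f z - m • z)) z := by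
      rw [hgeq]
      have := hfd.sub (hn z)
      rwa [← map_sub] at this
    exact (hasGradientAt_iff_hasFDerivAt.mpr this).gradient
  have := grad_mono hgd hgconv x y
  rw [hgrad x, hgrad y, inner_sub_left, inner_sub_left, real_inner_smul_left,
    real_inner_smul_left] at this
  rw [inner_sub_left]
  have hxy : ⟪y - x, y - x⟫ = ‖y - x‖ ^ 2 := real_inner_self_eq_norm_sq _
  have h1 : ⟪y, y - x⟫ - ⟪x, y - x⟫ = ‖y - x‖ ^ 2 := by
    rw [← inner_sub_left, hxy]
  have h2 : m * ⟪y, y - x⟫ - m * ⟪x, y - x⟫ = m * ‖y - x‖ ^ 2 := by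
    rw [← mul_sub, h1]
  linarith

set_option maxHeartbeats 1000000 in
/-- The primal-dual gradient operator `T(p,q,μlo,μhi)` is strongly
monotone on `ℝ^{4N}` with constant `min m η` (the Euclidean inner product and squared
norm on `ℝ^{4N}` decompose as the sums over the four `ℝ^N` blocks). -/
theorem stmt2 (N : ℕ) (R X : Matrix (Fin N) (Fin N) ℝ)
    (vt vlo vhi : EuclideanSpace ℝ (Fin N)) (PI η m : ℝ)
    (hη : 0 < η) (hm : 0 < m)
    (C : Fin N → EuclideanSpace ℝ (Fin 2) → ℝ)
    (hCdiff : ∀ i, Differentiable ℝ (C i))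
    (hC : ∀ i, StrongConvexOn Set.univ m (C i))
    (C0 : ℝ → ℝ) (hC0diff : Differentiable ℝ C0)
    (hC0 : ConvexOn ℝ Set.univ C0)
    (v : EuclideanSpace ℝ (Fin N) → EuclideanSpace ℝ (Fin N) → EuclideanSpace ℝ (Fin N))
    (hv : ∀ p q i, v p q i = R.mulVec p i + X.mulVec q i + vt i)
    (P0 : EuclideanSpace ℝ (Fin N) → ℝ)
    (hP0 : ∀ p, P0 p = -PI - ∑ i, p i)
    (Tp Tq Tl Th : EuclideanSpace ℝ (Fin N) → EuclideanSpace ℝ (Fin N) →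
        EuclideanSpace ℝ (Fin N) → EuclideanSpace ℝ (Fin N) → EuclideanSpace ℝ (Fin N))
    (hTp : ∀ p q μlo μhi i, Tp p q μlo μhi i =
      gradient (C i) (WithLp.toLp 2 ![p i, q i]) 0 - deriv C0 (P0 p) + R.transpose.mulVec (μhi - μlo) i)
    (hTq : ∀ p q μlo μhi i, Tq p q μlo μhi i =
      gradient (C i) (WithLp.toLp 2 ![p i, q i]) 1 + X.transpose.mulVec (μhi - μlo) i)
    (hTl : ∀ p q μlo μhi i, Tl p q μlo μhi i = v p q i - vlo i + η * μlo i)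
    (hTh : ∀ p q μlo μhi i, Th p q μlo μhi i = vhi i - v p q i + η * μhi i) :
    ∀ p q μlo μhi p' q' μlo' μhi' : EuclideanSpace ℝ (Fin N),
      min m η * (‖p - p'‖ ^ 2 + ‖q - q'‖ ^ 2 + ‖μlo - μlo'‖ ^ 2 + ‖μhi - μhi'‖ ^ 2) ≤
        ⟪Tp p q μlo μhi - Tp p' q' μlo' μhi', p - p'⟫
        + ⟪Tq p q μlo μhi - Tq p' q' μlo' μhi', q - q'⟫
        + ⟪Tl p q μlo μhi - Tl p' q' μlo' μhi', μlo - μlo'⟫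
        + ⟪Th p q μlo μhi - Th p' q' μlo' μhi', μhi - μhi'⟫ := by
  intro p q μlo μhi p' q' μlo' μhi'
  -- abbreviations
  set d := deriv C0 (P0 p) with hd
  set d' := deriv C0 (P0 p') with hd'
  set G0 : Fin N → ℝ := fun i => gradient (C i) (WithLp.toLp 2 ![p i, q i]) 0 with hG0
  set G0' : Fin N → ℝ := fun i => gradient (C i) (WithLp.toLp 2 ![p' i, q' i]) 0 with hG0'
  set G1 : Fin N → ℝ := fun i => gradient (C i) (WithLp.toLp 2 ![p i, q i]) 1 with hG1
  set G1' : Fin N → ℝ := fun i => gradient (C i) (WithLp.toLp 2 ![p' i, q' i]) 1 with hG1'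
  set MR : Fin N → ℝ := fun j => ∑ i, R j i * (p i - p' i) with hMR
  set MX : Fin N → ℝ := fun j => ∑ i, X j i * (q i - q' i) with hMX
  -- norms as sums
  have np : ‖p - p'‖ ^ 2 = ∑ i, (p i - p' i) ^ 2 := by
    rw [← real_inner_self_eq_norm_sq]
    simp only [PiLp.inner_apply, RCLike.inner_apply, conj_trivial, PiLp.sub_apply, sq]
  have nq : ‖q - q'‖ ^ 2 = ∑ i, (q i - q' i) ^ 2 := by
    rw [← real_inner_self_eq_norm_sq]
    simp only [PiLp.inner_apply, RCLike.inner_apply, conj_trivial, PiLp.sub_apply, sq]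
  have nl : ‖μlo - μlo'‖ ^ 2 = ∑ i, (μlo i - μlo' i) ^ 2 := by
    rw [← real_inner_self_eq_norm_sq]
    simp only [PiLp.inner_apply, RCLike.inner_apply, conj_trivial, PiLp.sub_apply, sq]
  have nh : ‖μhi - μhi'‖ ^ 2 = ∑ i, (μhi i - μhi' i) ^ 2 := by
    rw [← real_inner_self_eq_norm_sq]
    simp only [PiLp.inner_apply, RCLike.inner_apply, conj_trivial, PiLp.sub_apply, sq]
  -- block A
  have hA : ⟪Tp p q μlo μhi - Tp p' q' μlo' μhi', p - p'⟫
      = (∑ i, (G0 i - G0' i) * (p i - p' i)) - (d - d') * (∑ i, (p i - p' i))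
        + ∑ j, ((μhi j - μhi' j) - (μlo j - μlo' j)) * MR j := by
    simp only [PiLp.inner_apply, RCLike.inner_apply, conj_trivial, PiLp.sub_apply, hTp, Pi.sub_apply,
      Matrix.mulVec, dotProduct, Matrix.transpose_apply, hMR]
    rw [Finset.mul_sum, ← Finset.sum_sub_distrib]
    simp only [Finset.mul_sum]
    rw [Finset.sum_comm (f := fun j i => ((μhi j - μhi' j) - (μlo j - μlo' j)) * (R j i * (p i - p' i))),
      ← Finset.sum_add_distrib]
    refine Finset.sum_congr rfl fun i _ => ?_
    have hs : (∑ x, (μhi x - μhi' x - (μlo x - μlo' x)) * (R x i * (p i - p' i)))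
        = ((∑ x, R x i * (μhi x - μlo x)) - ∑ x, R x i * (μhi' x - μlo' x)) * (p i - p' i) := by
      rw [sub_mul, Finset.sum_mul, Finset.sum_mul, ← Finset.sum_sub_distrib]
      exact Finset.sum_congr rfl fun x _ => by ring
    rw [hs]
    simp only [hG0, hG0', hd, hd']
    ring
  -- block B
  have hB : ⟪Tq p q μlo μhi - Tq p' q' μlo' μhi', q - q'⟫
      = (∑ i, (G1 i - G1' i) * (q i - q' i))
        + ∑ j, ((μhi j - μhi' j) - (μlo j - μlo' j)) * MX j := by
    simp only [PiLp.inner_apply, RCLike.inner_apply, conj_trivial, PiLp.sub_apply, hTq, Pi.sub_apply,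
      Matrix.mulVec, dotProduct, Matrix.transpose_apply, hMX]
    simp only [Finset.mul_sum]
    rw [Finset.sum_comm (f := fun j i => ((μhi j - μhi' j) - (μlo j - μlo' j)) * (X j i * (q i - q' i))),
      ← Finset.sum_add_distrib]
    refine Finset.sum_congr rfl fun i _ => ?_
    have hs : (∑ x, (μhi x - μhi' x - (μlo x - μlo' x)) * (X x i * (q i - q' i)))
        = ((∑ x, X x i * (μhi x - μlo x)) - ∑ x, X x i * (μhi' x - μlo' x)) * (q i - q' i) := by
      rw [sub_mul, Finset.sum_mul, Finset.sum_mul, ← Finset.sum_sub_distrib]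
      exact Finset.sum_congr rfl fun x _ => by ring
    rw [hs]
    simp only [hG1, hG1']
    ring
  -- block C
  have hCc : ⟪Tl p q μlo μhi - Tl p' q' μlo' μhi', μlo - μlo'⟫
      = (∑ j, (MR j + MX j) * (μlo j - μlo' j)) + η * ∑ j, (μlo j - μlo' j) ^ 2 := by
    simp only [PiLp.inner_apply, RCLike.inner_apply, conj_trivial, PiLp.sub_apply, hTl, hv,
      Matrix.mulVec, dotProduct, hMR, hMX]
    rw [Finset.mul_sum, ← Finset.sum_add_distrib]
    refine Finset.sum_congr rfl fun j _ => ?_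
    have h1 : (∑ x, R j x * (p x - p' x)) = (∑ x, R j x * p x) - ∑ x, R j x * p' x := by
      rw [← Finset.sum_sub_distrib]; exact Finset.sum_congr rfl fun x _ => by ring
    have h2 : (∑ x, X j x * (q x - q' x)) = (∑ x, X j x * q x) - ∑ x, X j x * q' x := by
      rw [← Finset.sum_sub_distrib]; exact Finset.sum_congr rfl fun x _ => by ring
    rw [h1, h2]
    ring
  -- block D
  have hD : ⟪Th p q μlo μhi - Th p' q' μlo' μhi', μhi - μhi'⟫
      = -(∑ j, (MR j + MX j) * (μhi j - μhi' j)) + η * ∑ j, (μhi j - μhi' j) ^ 2 := by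
    simp only [PiLp.inner_apply, RCLike.inner_apply, conj_trivial, PiLp.sub_apply, hTh, hv,
      Matrix.mulVec, dotProduct, hMR, hMX]
    rw [Finset.mul_sum, ← Finset.sum_neg_distrib, ← Finset.sum_add_distrib]
    refine Finset.sum_congr rfl fun j _ => ?_
    have h1 : (∑ x, R j x * (p x - p' x)) = (∑ x, R j x * p x) - ∑ x, R j x * p' x := by
      rw [← Finset.sum_sub_distrib]; exact Finset.sum_congr rfl fun x _ => by ring
    have h2 : (∑ x, X j x * (q x - q' x)) = (∑ x, X j x * q x) - ∑ x, X j x * q' x := by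
      rw [← Finset.sum_sub_distrib]; exact Finset.sum_congr rfl fun x _ => by ring
    rw [h1, h2]
    ring
  -- cross terms cancel
  have hcross : (∑ j, ((μhi j - μhi' j) - (μlo j - μlo' j)) * MR j)
      + (∑ j, ((μhi j - μhi' j) - (μlo j - μlo' j)) * MX j)
      + (∑ j, (MR j + MX j) * (μlo j - μlo' j))
      + (-(∑ j, (MR j + MX j) * (μhi j - μhi' j))) = 0 := by
    rw [← Finset.sum_neg_distrib, ← Finset.sum_add_distrib, ← Finset.sum_add_distrib,
      ← Finset.sum_add_distrib]
    exact Finset.sum_eq_zero fun j _ => by ring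
  -- strong convexity part
  have hkey : m * ((∑ i, (p i - p' i) ^ 2) + ∑ i, (q i - q' i) ^ 2)
      ≤ (∑ i, (G0 i - G0' i) * (p i - p' i)) + ∑ i, (G1 i - G1' i) * (q i - q' i) := by
    rw [← Finset.sum_add_distrib, ← Finset.sum_add_distrib, Finset.mul_sum]
    refine Finset.sum_le_sum fun i _ => ?_
    have hsgm := strong_grad_mono (hCdiff i) (hC i)
      (WithLp.toLp 2 ![p' i, q' i]) (WithLp.toLp 2 ![p i, q i])
    rw [← real_inner_self_eq_norm_sq] at hsgm
    simp only [PiLp.inner_apply, RCLike.inner_apply, conj_trivial, PiLp.sub_apply,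
      Fin.sum_univ_two, Matrix.cons_val_zero, Matrix.cons_val_one, Matrix.head_cons] at hsgm
    simp only [hG0, hG0', hG1, hG1']
    nlinarith [hsgm]
  -- convexity of C0 part
  have hdm : 0 ≤ (d - d') * (P0 p - P0 p') := by
    rcases le_total (P0 p) (P0 p') with h | h
    · have := hC0.monotoneOn_deriv (fun x _ => hC0diff x) (Set.mem_univ _) (Set.mem_univ _) h
      rw [← hd, ← hd'] at this
      nlinarith
    · have := hC0.monotoneOn_deriv (fun x _ => hC0diff x) (Set.mem_univ _) (Set.mem_univ _) h
      rw [← hd, ← hd'] at this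
      nlinarith
  have hPd : P0 p - P0 p' = -∑ i, (p i - p' i) := by
    rw [hP0, hP0, Finset.sum_sub_distrib]; ring
  have hC0term : 0 ≤ -((d - d') * ∑ i, (p i - p' i)) := by
    rw [hPd] at hdm; linarith [hdm]
  -- assemble
  rw [hA, hB, hCc, hD, np, nq, nl, nh]
  have s1 : (0:ℝ) ≤ ∑ i, (p i - p' i) ^ 2 := Finset.sum_nonneg fun i _ => sq_nonneg _
  have s2 : (0:ℝ) ≤ ∑ i, (q i - q' i) ^ 2 := Finset.sum_nonneg fun i _ => sq_nonneg _
  have s3 : (0:ℝ) ≤ ∑ i, (μlo i - μlo' i) ^ 2 := Finset.sum_nonneg fun i _ => sq_nonneg _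
  have s4 : (0:ℝ) ≤ ∑ i, (μhi i - μhi' i) ^ 2 := Finset.sum_nonneg fun i _ => sq_nonneg _
  have t1 : min m η * ((∑ i, (p i - p' i) ^ 2) + ∑ i, (q i - q' i) ^ 2)
      ≤ m * ((∑ i, (p i - p' i) ^ 2) + ∑ i, (q i - q' i) ^ 2) :=
    mul_le_mul_of_nonneg_right (min_le_left m η) (by linarith)
  have t2 : min m η * ((∑ i, (μlo i - μlo' i) ^ 2) + ∑ i, (μhi i - μhi' i) ^ 2)
      ≤ η * ((∑ i, (μlo i - μlo' i) ^ 2) + ∑ i, (μhi i - μhi' i) ^ 2) :=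
    mul_le_mul_of_nonneg_right (min_le_right m η) (by linarith)
  nlinarith [hkey, hcross, hC0term, t1, t2]
end

section
/- Let T : K → E be M-strongly monotone and L-Lipschitz on K with M, L > 0, let ε > 0, and let z* ∈ K satisfy z* = Π_K(z* − εT(z*)). Then for every z ∈ K, ‖Π_K(z − εT(z)) − z*‖² ≤ (1 + ε²L² − 2εM)·‖z − z*‖². -/
open scoped RealInnerProductSpace

/-- One-step contraction estimate for the projected gradient step:
if `T` is `M`-strongly monotone and `L`-Lipschitz on a nonempty closed convex `K` in a
real Hilbert space, `ε > 0`, and `z*` is a fixed point of `z ↦ Π_K(z − εT(z))`, then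
`‖Π_K(z − εT(z)) − z*‖² ≤ (1 + ε²L² − 2εM)‖z − z*‖²` for every `z ∈ K`. -/
theorem stmt6 {E : Type*} [NormedAddCommGroup E] [InnerProductSpace ℝ E] [CompleteSpace E]
    (K : Set E) (hKne : K.Nonempty) (hKcl : IsClosed K) (hKconv : Convex ℝ K)
    (proj : E → E)
    (hproj : ∀ x, proj x ∈ K ∧ ∀ y ∈ K, ‖x - proj x‖ ≤ ‖x - y‖)
    (T : E → E) (M L ε : ℝ) (hM : 0 < M) (hL : 0 < L) (hε : 0 < ε)
    (hmono : ∀ z ∈ K, ∀ z' ∈ K, M * ‖z - z'‖ ^ 2 ≤ ⟪T z - T z', z - z'⟫)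
    (hlip : ∀ z ∈ K, ∀ z' ∈ K, ‖T z - T z'‖ ≤ L * ‖z - z'‖)
    (zs : E) (hzsK : zs ∈ K) (hfix : zs = proj (zs - ε • T zs)) :
    ∀ z ∈ K, ‖proj (z - ε • T z) - zs‖ ^ 2 ≤
      (1 + ε ^ 2 * L ^ 2 - 2 * ε * M) * ‖z - zs‖ ^ 2 := by
  -- variational characterization of proj
  have hvar : ∀ x, ∀ w ∈ K, ⟪x - proj x, w - proj x⟫ ≤ 0 := by
    intro x
    have hmem := (hproj x).1
    have hmin := (hproj x).2
    rw [← norm_eq_iInf_iff_real_inner_le_zero hKconv hmem]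
    haveI : Nonempty K := ⟨⟨proj x, hmem⟩⟩
    exact le_antisymm (le_ciInf fun (w : K) => hmin w.1 w.2)
      (ciInf_le ⟨0, by rintro _ ⟨w, rfl⟩; positivity⟩ (⟨proj x, hmem⟩ : K))
  -- nonexpansiveness
  have hne : ∀ a b, ‖proj a - proj b‖ ≤ ‖a - b‖ := by
    intro a b
    have h1 := hvar a (proj b) (hproj b).1
    have h2 := hvar b (proj a) (hproj a).1
    have key : ‖proj a - proj b‖ ^ 2 ≤ ⟪a - b, proj a - proj b⟫ := by
      have := add_nonpos h1 h2
      have expand : ⟪a - proj a, proj b - proj a⟫ + ⟪b - proj b, proj a - proj b⟫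
          = ⟪a - b, proj b - proj a⟫ + ‖proj a - proj b‖ ^ 2 := by
        rw [← real_inner_self_eq_norm_sq]
        simp only [inner_sub_left, inner_sub_right, real_inner_comm]
        ring
      rw [expand] at this
      have : ‖proj a - proj b‖ ^ 2 ≤ - ⟪a - b, proj b - proj a⟫ := by linarith
      rwa [← inner_neg_right, neg_sub] at this
    have hcs := real_inner_le_norm (a - b) (proj a - proj b)
    nlinarith [norm_nonneg (proj a - proj b), norm_nonneg (a - b)]
  intro z hz
  have h1 := hne (z - ε • T z) (zs - ε • T zs)
  rw [← hfix] at h1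
  have hdiff : (z - ε • T z) - (zs - ε • T zs) = (z - zs) - ε • (T z - T zs) := by
    rw [smul_sub]; abel
  have hexp : ‖(z - zs) - ε • (T z - T zs)‖ ^ 2
      = ‖z - zs‖ ^ 2 - 2 * ε * ⟪T z - T zs, z - zs⟫ + ε ^ 2 * ‖T z - T zs‖ ^ 2 := by
    rw [@norm_sub_sq_real, norm_smul, real_inner_smul_right, real_inner_comm]
    simp [abs_of_pos hε]
    ring
  have hm := hmono z hz zs hzsK
  have hl := hlip z hz zs hzsK
  have hsq : ‖T z - T zs‖ ^ 2 ≤ L ^ 2 * ‖z - zs‖ ^ 2 := by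
    nlinarith [norm_nonneg (T z - T zs), norm_nonneg (z - zs)]
  have h2 : ‖proj (z - ε • T z) - zs‖ ^ 2 ≤ ‖(z - zs) - ε • (T z - T zs)‖ ^ 2 := by
    rw [← hdiff]
    have := norm_nonneg (proj (z - ε • T z) - zs)
    nlinarith
  rw [hexp] at h2
  nlinarith [sq_nonneg ε]
end

section
/- Let T : K → E be M-strongly monotone and L-Lipschitz on K with 0 < M ≤ L, let z* ∈ K satisfy z* = Π_K(z* − εT(z*)), and suppose the stepsize satisfies 0 < ε < 2M/L². Then the iterates z(t+1) := Π_K(z(t) − εT(z(t))) starting from any z(0) ∈ K satisfy ‖z(t) − z*‖² ≤ (1 + ε²L² − 2εM)^t · ‖z(0) − z*‖² for every t ∈ ℕ; in particular, since 0 ≤ 1 + ε²L² − 2εM < 1, the sequence z(t) converges to z* exponentially fast. -/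
open scoped RealInnerProductSpace

/-- Exponential convergence of the projected gradient iteration:
under `0 < M ≤ L` and `0 < ε < 2M/L²`, the iterates `z(t+1) = Π_K(z(t) − εT(z(t)))`
satisfy `‖z(t) − z*‖² ≤ (1 + ε²L² − 2εM)^t ‖z(0) − z*‖²`, and `z(t) → z*`. -/
theorem stmt7 {E : Type*} [NormedAddCommGroup E] [InnerProductSpace ℝ E] [CompleteSpace E]
    (K : Set E) (hKne : K.Nonempty) (hKcl : IsClosed K) (hKconv : Convex ℝ K)
    (proj : E → E)
    (hproj : ∀ x, proj x ∈ K ∧ ∀ y ∈ K, ‖x - proj x‖ ≤ ‖x - y‖)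
    (T : E → E) (M L ε : ℝ) (hM : 0 < M) (hML : M ≤ L)
    (hε : 0 < ε) (hεlt : ε < 2 * M / L ^ 2)
    (hmono : ∀ z ∈ K, ∀ z' ∈ K, M * ‖z - z'‖ ^ 2 ≤ ⟪T z - T z', z - z'⟫)
    (hlip : ∀ z ∈ K, ∀ z' ∈ K, ‖T z - T z'‖ ≤ L * ‖z - z'‖)
    (zs : E) (hzsK : zs ∈ K) (hfix : zs = proj (zs - ε • T zs))
    (z : ℕ → E) (hz0 : z 0 ∈ K)
    (hzrec : ∀ t, z (t + 1) = proj (z t - ε • T (z t))) :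
    (∀ t, ‖z t - zs‖ ^ 2 ≤ (1 + ε ^ 2 * L ^ 2 - 2 * ε * M) ^ t * ‖z 0 - zs‖ ^ 2) ∧
    Filter.Tendsto z Filter.atTop (nhds zs) := by
  have hL : 0 < L := lt_of_lt_of_le hM hML
  set c : ℝ := 1 + ε ^ 2 * L ^ 2 - 2 * ε * M with hc
  -- variational inequality for the projection
  have hvar : ∀ x, ∀ w ∈ K, ⟪x - proj x, w - proj x⟫ ≤ 0 := by
    intro x
    have h1 := (hproj x).1
    have heq : ‖x - proj x‖ = ⨅ w : K, ‖x - w‖ := by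
      haveI : Nonempty K := ⟨⟨proj x, h1⟩⟩
      apply le_antisymm
      · exact le_ciInf fun w => (hproj x).2 w w.2
      · exact ciInf_le ⟨0, fun _ ⟨_, h⟩ => h ▸ norm_nonneg _⟩ (⟨proj x, h1⟩ : K)
    exact (norm_eq_iInf_iff_real_inner_le_zero hKconv h1).1 heq
  -- nonexpansiveness
  have hnonexp : ∀ x y, ‖proj x - proj y‖ ≤ ‖x - y‖ := by
    intro x y
    have h1 := hvar x (proj y) (hproj y).1
    have h2 := hvar y (proj x) (hproj x).1
    have key : ‖proj x - proj y‖ ^ 2 ≤ ⟪x - y, proj x - proj y⟫ := by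
      have := add_nonpos h1 h2
      have expand : ⟪x - proj x, proj y - proj x⟫ + ⟪y - proj y, proj x - proj y⟫
          = ⟪x - y, proj y - proj x⟫ + ‖proj x - proj y‖ ^ 2 := by
        rw [@norm_sub_sq_real]
        simp only [inner_sub_left, inner_sub_right, real_inner_self_eq_norm_sq,
          real_inner_comm (proj x) (proj y)]
        ring
      have : ⟪x - y, proj y - proj x⟫ + ‖proj x - proj y‖ ^ 2 ≤ 0 := expand ▸ this
      have h3 : ⟪x - y, proj y - proj x⟫ = - ⟪x - y, proj x - proj y⟫ := by
        rw [← inner_neg_right, neg_sub]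
      linarith [h3 ▸ this]
    rcases eq_or_lt_of_le (norm_nonneg (proj x - proj y)) with h0 | h0
    · rw [← h0]; exact norm_nonneg _
    · have := key.trans (real_inner_le_norm (x - y) (proj x - proj y))
      have := (mul_le_mul_iff_of_pos_right h0).1 (by nlinarith : ‖proj x - proj y‖ * ‖proj x - proj y‖
        ≤ ‖x - y‖ * ‖proj x - proj y‖)
      linarith
  have hcnonneg : 0 ≤ c := by
    rw [hc]
    nlinarith [sq_nonneg (1 - ε * M),
      mul_nonneg (sq_nonneg ε) (sub_nonneg.2 (by nlinarith : M ^ 2 ≤ L ^ 2))]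
  have hclt : c < 1 := by
    rw [lt_div_iff₀ (by positivity)] at hεlt
    rw [hc]
    nlinarith [mul_lt_mul_of_pos_left hεlt hε]
  -- iterates stay in K
  have hmem : ∀ t, z t ∈ K := by
    intro t
    induction t with
    | zero => exact hz0
    | succ n _ => rw [hzrec n]; exact (hproj _).1
  -- one step contraction
  have hstep : ∀ t, ‖z (t + 1) - zs‖ ^ 2 ≤ c * ‖z t - zs‖ ^ 2 := by
    intro t
    have h1 : ‖z (t + 1) - zs‖ ≤ ‖(z t - ε • T (z t)) - (zs - ε • T zs)‖ := by
      rw [hzrec t]; nth_rewrite 1 [hfix]; exact hnonexp _ _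
    have h2 : (z t - ε • T (z t)) - (zs - ε • T zs)
        = (z t - zs) - ε • (T (z t) - T zs) := by
      rw [smul_sub]; abel
    have h3 : ‖(z t - zs) - ε • (T (z t) - T zs)‖ ^ 2
        = ‖z t - zs‖ ^ 2 - 2 * ε * ⟪T (z t) - T zs, z t - zs⟫
          + ε ^ 2 * ‖T (z t) - T zs‖ ^ 2 := by
      rw [@norm_sub_sq_real, norm_smul, inner_smul_right,
        real_inner_comm (z t - zs)]
      simp [Real.norm_eq_abs, abs_of_pos hε]
      ring
    have hmo := hmono (z t) (hmem t) zs hzsK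
    have hli := hlip (z t) (hmem t) zs hzsK
    have hli2 : ‖T (z t) - T zs‖ ^ 2 ≤ L ^ 2 * ‖z t - zs‖ ^ 2 := by
      nlinarith [norm_nonneg (T (z t) - T zs), norm_nonneg (z t - zs)]
    have h4 : ‖z (t + 1) - zs‖ ^ 2 ≤ ‖(z t - zs) - ε • (T (z t) - T zs)‖ ^ 2 := by
      rw [← h2]
      exact pow_le_pow_left₀ (norm_nonneg _) h1 2
    rw [h3] at h4
    have hε2 : (0:ℝ) ≤ ε ^ 2 := sq_nonneg ε
    nlinarith
  -- main bound by induction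
  have hmain : ∀ t, ‖z t - zs‖ ^ 2 ≤ c ^ t * ‖z 0 - zs‖ ^ 2 := by
    intro t
    induction t with
    | zero => simp
    | succ n ih =>
      calc ‖z (n + 1) - zs‖ ^ 2 ≤ c * ‖z n - zs‖ ^ 2 := hstep n
        _ ≤ c * (c ^ n * ‖z 0 - zs‖ ^ 2) := by
            exact mul_le_mul_of_nonneg_left ih hcnonneg
        _ = c ^ (n + 1) * ‖z 0 - zs‖ ^ 2 := by ring
  refine ⟨hmain, ?_⟩
  rw [tendsto_iff_norm_sub_tendsto_zero]
  have hsq : Filter.Tendsto (fun t => ‖z t - zs‖ ^ 2) Filter.atTop (nhds 0) := by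
    have hgeo : Filter.Tendsto (fun t : ℕ => c ^ t * ‖z 0 - zs‖ ^ 2) Filter.atTop (nhds 0) := by
      have := tendsto_pow_atTop_nhds_zero_of_lt_one hcnonneg hclt
      simpa using this.mul_const (‖z 0 - zs‖ ^ 2)
    exact squeeze_zero (fun t => sq_nonneg _) hmain hgeo
  have h := (Real.continuous_sqrt.tendsto 0).comp hsq
  have heq : ((fun x => Real.sqrt x) ∘ fun t => ‖z t - zs‖ ^ 2) = fun t => ‖z t - zs‖ := by
    funext t; simp [Function.comp, Real.sqrt_sq (norm_nonneg _)]
  rw [heq] at h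
  simpa using h
end

section
/- Let n_h and n_k be vertices of G such that neither is an ancestor of the other. If i is a descendant of n_h and j is a descendant of n_k, then E(i) ∩ E(j) = E(n_h) ∩ E(n_k). -/
/-- In a finite tree `G` rooted at `root`, with `E(v)` the edge set of
the unique path from the root to `v` and "ancestor" meaning lying on that path: if
neither `nh` nor `nk` is an ancestor of the other, `i` is a descendant of `nh`, and `j`
is a descendant of `nk`, then `E(i) ∩ E(j) = E(nh) ∩ E(nk)`. -/
theorem stmt8 {V : Type*} [Fintype V] [DecidableEq V]
    (G : SimpleGraph V) (hG : G.IsTree) (root : V)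
    (path : ∀ v, G.Walk root v) (hpath : ∀ v, (path v).IsPath)
    (nh nk i j : V)
    (hhk : nh ∉ (path nk).support) (hkh : nk ∉ (path nh).support)
    (hi : nh ∈ (path i).support) (hj : nk ∈ (path j).support) :
    (path i).edges.toFinset ∩ (path j).edges.toFinset =
      (path nh).edges.toFinset ∩ (path nk).edges.toFinset := by
  classical
  have uniq : ∀ {w : V} (p q : G.Walk root w), p.IsPath → q.IsPath → p = q := by
    intro w p q hp hq
    exact (hG.existsUnique_path root w).unique hp hq
  have htake : ∀ (v w : V) (hw : w ∈ (path v).support),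
      path w = (path v).takeUntil w hw := by
    intro v w hw
    exact uniq _ _ (hpath w) ((hpath v).takeUntil hw)
  -- key: if w is on the part of path v after m, then m is on path w
  have key : ∀ (m v w : V) (hv : m ∈ (path v).support),
      w ∈ ((path v).dropUntil m hv).support → m ∈ (path w).support := by
    intro m v w hv hw
    set r := (path v).dropUntil m hv with hr
    have hq : (((path v).takeUntil m hv).append (r.takeUntil w hw)).IsPath := by
      apply SimpleGraph.Walk.IsPath.of_append_left (q := r.dropUntil w hw)
      rw [← SimpleGraph.Walk.append_assoc, SimpleGraph.Walk.take_spec r hw, hr,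
        SimpleGraph.Walk.take_spec]
      exact hpath v
    have := uniq (path w) _ (hpath w) hq
    rw [this, SimpleGraph.Walk.mem_support_append_iff]
    left
    exact SimpleGraph.Walk.end_mem_support _
  -- decompose path i and path j
  have hdi : path i = (path nh).append ((path i).dropUntil nh hi) := by
    rw [htake i nh hi, SimpleGraph.Walk.take_spec]
  have hdj : path j = (path nk).append ((path j).dropUntil nk hj) := by
    rw [htake j nk hj, SimpleGraph.Walk.take_spec]
  ext e
  simp only [Finset.mem_inter, List.mem_toFinset]
  constructor
  · rintro ⟨hei, hej⟩
    rw [hdi, SimpleGraph.Walk.edges_append, List.mem_append] at hei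
    rw [hdj, SimpleGraph.Walk.edges_append, List.mem_append] at hej
    induction e using Sym2.ind with
    | _ u v =>
    rcases hei with hei | hei
    · rcases hej with hej | hej
      · exact ⟨hei, hej⟩
      · -- e on path nh and on tail of path j : contradiction
        exfalso
        have hu1 : u ∈ ((path j).dropUntil nk hj).support :=
          SimpleGraph.Walk.fst_mem_support_of_mem_edges _ hej
        have hnk : nk ∈ (path u).support := key nk j u hj hu1
        have hu2 : u ∈ (path nh).support :=
          SimpleGraph.Walk.fst_mem_support_of_mem_edges _ hei
        have hsub := SimpleGraph.Walk.support_takeUntil_subset (path nh) hu2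
        rw [← htake nh u hu2] at hsub
        exact hkh (hsub hnk)
    · exfalso
      have hu1 : u ∈ ((path i).dropUntil nh hi).support :=
        SimpleGraph.Walk.fst_mem_support_of_mem_edges _ hei
      have hnh : nh ∈ (path u).support := key nh i u hi hu1
      rcases hej with hej | hej
      · -- e on tail of path i and on path nk : contradiction
        have hu2 : u ∈ (path nk).support :=
          SimpleGraph.Walk.fst_mem_support_of_mem_edges _ hej
        have hsub := SimpleGraph.Walk.support_takeUntil_subset (path nk) hu2
        rw [← htake nk u hu2] at hsub
        exact hhk (hsub hnh)
      · -- e on both tails: contradiction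
        have hu2 : u ∈ ((path j).dropUntil nk hj).support :=
          SimpleGraph.Walk.fst_mem_support_of_mem_edges _ hej
        have hnk : nk ∈ (path u).support := key nk j u hj hu2
        have := hnk
        rw [← SimpleGraph.Walk.take_spec (path u) hnh,
          SimpleGraph.Walk.mem_support_append_iff] at this
        rcases this with h | h
        · rw [← htake u nh hnh] at h
          exact hkh h
        · exact hhk (key nh u nk hnh h)
  · rintro ⟨heh, hek⟩
    constructor
    · rw [htake i nh hi] at heh
      exact SimpleGraph.Walk.edges_takeUntil_subset _ _ heh
    · rw [htake j nk hj] at hek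
      exact SimpleGraph.Walk.edges_takeUntil_subset _ _ hek
end

section
/- Equip each edge e of G with real weights r(e) and x(e), and for vertices u, w define R_{uw} := 2·Σ_{e ∈ E(u) ∩ E(w)} r(e) and X_{uw} := 2·Σ_{e ∈ E(u) ∩ E(w)} x(e). (a) If n_h and n_k are vertices of G such that neither is an ancestor of the other, i is a descendant of n_h, and j is a descendant of n_k, then R_{ij} = R_{n_h n_k} and X_{ij} = X_{n_h n_k}. (b) If j is a descendant of n_k and i is not a descendant of n_k, then R_{ij} = R_{i n_k} and X_{ij} = X_{i n_k}. -/
namespace Stmt10Aux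

open SimpleGraph Walk

variable {V : Type*} [DecidableEq V] {G : SimpleGraph V} {root : V}

lemma uniq (hG : G.IsTree) (path : ∀ v, G.Walk root v) (hpath : ∀ v, (path v).IsPath)
    {v : V} (p : G.Walk root v) (hp : p.IsPath) : p = path v :=
  (hG.existsUnique_path root v).unique hp (hpath v)

lemma takeUntil_eq (hG : G.IsTree) (path : ∀ v, G.Walk root v)
    (hpath : ∀ v, (path v).IsPath) {i u : V} (h : u ∈ (path i).support) :
    (path i).takeUntil u h = path u :=
  uniq hG path hpath _ ((hpath i).takeUntil h)

lemma supp_sub (hG : G.IsTree) (path : ∀ v, G.Walk root v)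
    (hpath : ∀ v, (path v).IsPath) {i u : V} (h : u ∈ (path i).support) :
    (path u).support ⊆ (path i).support := by
  rw [← takeUntil_eq hG path hpath h]
  exact Walk.support_takeUntil_subset _ h

lemma edges_split (hG : G.IsTree) (path : ∀ v, G.Walk root v)
    (hpath : ∀ v, (path v).IsPath) {i u : V} (h : u ∈ (path i).support) :
    (path i).edges = (path u).edges ++ ((path i).dropUntil u h).edges := by
  conv_lhs => rw [← (path i).take_spec h]
  rw [Walk.edges_append, takeUntil_eq hG path hpath h]

lemma edges_sub (hG : G.IsTree) (path : ∀ v, G.Walk root v)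
    (hpath : ∀ v, (path v).IsPath) {i u : V} (h : u ∈ (path i).support) :
    (path u).edges ⊆ (path i).edges := by
  rw [edges_split hG path hpath h]
  exact List.subset_append_left _ _

lemma mem_path_of_mem_dropUntil (hG : G.IsTree) (path : ∀ v, G.Walk root v)
    (hpath : ∀ v, (path v).IsPath) {i u w : V} (h : u ∈ (path i).support)
    (h2 : w ∈ ((path i).dropUntil u h).support) : u ∈ (path w).support := by
  set A := (path i).takeUntil u h with hA
  set D := (path i).dropUntil u h with hD
  set B := D.takeUntil w h2 with hB
  have hDp : D.IsPath := (hpath i).dropUntil h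
  have hBp : B.IsPath := hDp.takeUntil h2
  have huB : u ∉ B.support.tail := by
    have := hBp.support_nodup
    rw [B.support_eq_cons] at this
    exact (List.nodup_cons.mp this).1
  have hBD : B.support.tail ⊆ D.support.tail := by
    intro y hy
    have hyB : y ∈ B.support := List.mem_of_mem_tail hy
    have hyD : y ∈ D.support := Walk.support_takeUntil_subset _ _ hyB
    have hyu : y ≠ u := fun h' => huB (h' ▸ hy)
    rw [D.support_eq_cons] at hyD
    rcases List.mem_cons.mp hyD with h' | h'
    · exact absurd h' hyu
    · exact h'
  have hq : (A.append B).IsPath := by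
    rw [Walk.isPath_def, Walk.support_append]
    have hp : ((path i).support).Nodup := (hpath i).support_nodup
    conv at hp => rw [← (path i).take_spec h]
    rw [Walk.support_append, List.nodup_append] at hp
    obtain ⟨h1, h2', h3⟩ := hp
    rw [List.nodup_append]
    refine ⟨h1, ?_, ?_⟩
    · have := hBp.support_nodup
      rw [B.support_eq_cons] at this
      exact (List.nodup_cons.mp this).2
    · intro y hy y' hy'
      exact h3 y hy y' (hBD hy')
  have := uniq hG path hpath (A.append B) hq
  rw [← this, Walk.mem_support_append_iff]
  exact Or.inl A.end_mem_support

lemma comparable (hG : G.IsTree) (path : ∀ v, G.Walk root v)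
    (hpath : ∀ v, (path v).IsPath) {i u w : V}
    (hu : u ∈ (path i).support) (hw : w ∈ (path i).support) :
    w ∈ (path u).support ∨ u ∈ (path w).support := by
  rw [← (path i).take_spec hu, Walk.mem_support_append_iff] at hw
  rcases hw with hw | hw
  · left; rwa [takeUntil_eq hG path hpath hu] at hw
  · right; exact mem_path_of_mem_dropUntil hG path hpath hu hw

lemma anc_of_edge (hG : G.IsTree) (path : ∀ v, G.Walk root v)
    (hpath : ∀ v, (path v).IsPath) {i u : V} (h : u ∈ (path i).support)
    {a b : V} (he : s(a, b) ∈ (path i).edges) (hne : s(a, b) ∉ (path u).edges) :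
    u ∈ (path a).support ∧ u ∈ (path b).support := by
  rw [edges_split hG path hpath h, List.mem_append] at he
  rcases he with he | he
  · exact absurd he hne
  · exact ⟨mem_path_of_mem_dropUntil hG path hpath h
        (((path i).dropUntil u h).fst_mem_support_of_mem_edges he),
      mem_path_of_mem_dropUntil hG path hpath h
        (((path i).dropUntil u h).snd_mem_support_of_mem_edges he)⟩

lemma inter_a (hG : G.IsTree) (path : ∀ v, G.Walk root v)
    (hpath : ∀ v, (path v).IsPath) {nh nk i j : V}
    (h1 : nh ∉ (path nk).support) (h2 : nk ∉ (path nh).support)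
    (h3 : nh ∈ (path i).support) (h4 : nk ∈ (path j).support) :
    (path i).edges.toFinset ∩ (path j).edges.toFinset =
      (path nh).edges.toFinset ∩ (path nk).edges.toFinset := by
  ext e
  induction e using Sym2.ind with
  | _ a b =>
    simp only [Finset.mem_inter, List.mem_toFinset]
    constructor
    · rintro ⟨hei, hej⟩
      have haj : a ∈ (path j).support := (path j).fst_mem_support_of_mem_edges hej
      have hai : a ∈ (path i).support := (path i).fst_mem_support_of_mem_edges hei
      constructor
      · by_contra hne
        have hna := (anc_of_edge hG path hpath h3 hei hne).1
        have : nh ∈ (path j).support := supp_sub hG path hpath haj hna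
        rcases comparable hG path hpath this h4 with h' | h'
        · exact h2 h'
        · exact h1 h'
      · by_contra hne
        have hna := (anc_of_edge hG path hpath h4 hej hne).1
        have : nk ∈ (path i).support := supp_sub hG path hpath hai hna
        rcases comparable hG path hpath h3 this with h' | h'
        · exact h2 h'
        · exact h1 h'
    · rintro ⟨hh, hk⟩
      exact ⟨edges_sub hG path hpath h3 hh, edges_sub hG path hpath h4 hk⟩

lemma inter_b (hG : G.IsTree) (path : ∀ v, G.Walk root v)
    (hpath : ∀ v, (path v).IsPath) {nk i j : V}
    (h1 : nk ∈ (path j).support) (h2 : nk ∉ (path i).support) :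
    (path i).edges.toFinset ∩ (path j).edges.toFinset =
      (path i).edges.toFinset ∩ (path nk).edges.toFinset := by
  ext e
  induction e using Sym2.ind with
  | _ a b =>
    simp only [Finset.mem_inter, List.mem_toFinset]
    constructor
    · rintro ⟨hei, hej⟩
      refine ⟨hei, ?_⟩
      by_contra hne
      have hna := (anc_of_edge hG path hpath h1 hej hne).1
      have hai : a ∈ (path i).support := (path i).fst_mem_support_of_mem_edges hei
      exact h2 (supp_sub hG path hpath hai hna)
    · rintro ⟨hei, hek⟩
      exact ⟨hei, edges_sub hG path hpath h1 hek⟩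

end Stmt10Aux

/-- With edge weights `r, x` and mutual sensitivities
`R_{uw} = 2·Σ_{e ∈ E(u)∩E(w)} r(e)`, `X_{uw} = 2·Σ_{e ∈ E(u)∩E(w)} x(e)` on a finite
rooted tree: (a) if neither `nh` nor `nk` is an ancestor of the other, `i` is a
descendant of `nh` and `j` a descendant of `nk`, then `R_{ij} = R_{nh nk}` and
`X_{ij} = X_{nh nk}`; (b) if `j` is a descendant of `nk` and `i` is not, then
`R_{ij} = R_{i nk}` and `X_{ij} = X_{i nk}`. -/
theorem stmt10 {V : Type*} [Fintype V] [DecidableEq V]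
    (G : SimpleGraph V) (hG : G.IsTree) (root : V)
    (path : ∀ v, G.Walk root v) (hpath : ∀ v, (path v).IsPath)
    (r x : Sym2 V → ℝ) (Rs Xs : V → V → ℝ)
    (hRs : ∀ u w, Rs u w =
      2 * ∑ e ∈ (path u).edges.toFinset ∩ (path w).edges.toFinset, r e)
    (hXs : ∀ u w, Xs u w =
      2 * ∑ e ∈ (path u).edges.toFinset ∩ (path w).edges.toFinset, x e) :
    (∀ nh nk i j : V,
      nh ∉ (path nk).support → nk ∉ (path nh).support →
      nh ∈ (path i).support → nk ∈ (path j).support →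
      Rs i j = Rs nh nk ∧ Xs i j = Xs nh nk) ∧
    (∀ nk i j : V,
      nk ∈ (path j).support → nk ∉ (path i).support →
      Rs i j = Rs i nk ∧ Xs i j = Xs i nk) := by
  constructor
  · intro nh nk i j h1 h2 h3 h4
    have key := Stmt10Aux.inter_a hG path hpath h1 h2 h3 h4
    rw [hRs i j, hRs nh nk, hXs i j, hXs nh nk, key]
    exact ⟨rfl, rfl⟩
  · intro nk i j h1 h2
    have key := Stmt10Aux.inter_b hG path hpath h1 h2
    rw [hRs i j, hRs i nk, hXs i j, hXs i nk, key]
    exact ⟨rfl, rfl⟩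
end

section
/- Let each non-root vertex j of G have parent π(j), and let r(j), x(j) ∈ ℝ be the weights of the edge {π(j), j}. Given injections p, q : V∖{0} → ℝ, define the lossless branch flows P(j) := −Σ_{l ∈ V∖{0} : j is an ancestor of l or j = l} p(l) and Q(j) analogously with q. Suppose v : V → ℝ satisfies v(0) = ṽ and v(j) = v(π(j)) − 2(r(j)·P(j) + x(j)·Q(j)) for every non-root vertex j. Then for every non-root vertex i: v(i) = ṽ + Σ_{j ∈ V∖{0}} ( R_{ij}·p(j) + X_{ij}·q(j) ), where R_{ij} := 2·Σ_{non-root u : {π(u),u} ∈ E(i) ∩ E(j)} r(u) and X_{ij} := 2·Σ_{non-root u : {π(u),u} ∈ E(i) ∩ E(j)} x(u). -/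
/-- Closed form of the LinDistFlow recursion on a finite rooted tree:
if the squared voltages satisfy `v(root) = ṽ` and
`v(j) = v(π(j)) − 2(r(j)P(j) + x(j)Q(j))` with lossless branch flows
`P(j) = −Σ_{l ≠ root, j ∈ path(l)} p(l)` (and `Q` analogously), then for every non-root
`i`, `v(i) = ṽ + Σ_{j ≠ root} (R_{ij} p(j) + X_{ij} q(j))` where
`R_{ij} = 2·Σ_{u ≠ root, {π(u),u} ∈ E(i)∩E(j)} r(u)` and similarly `X_{ij}`. -/
theorem stmt15 {V : Type*} [Fintype V] [DecidableEq V]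
    (G : SimpleGraph V) (hG : G.IsTree) (root : V)
    (path : ∀ v, G.Walk root v) (hpath : ∀ v, (path v).IsPath)
    (parent : V → V)
    (hparent : ∀ j, j ≠ root → G.Adj (parent j) j ∧ parent j ∈ (path j).support)
    (r x : V → ℝ) (p q : V → ℝ)
    (P Q : V → ℝ)
    (hP : ∀ j, P j =
      -∑ l ∈ Finset.univ.filter (fun l => l ≠ root ∧ j ∈ (path l).support), p l)
    (hQ : ∀ j, Q j =
      -∑ l ∈ Finset.univ.filter (fun l => l ≠ root ∧ j ∈ (path l).support), q l)
    (vt : ℝ) (v : V → ℝ)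
    (hv0 : v root = vt)
    (hvrec : ∀ j, j ≠ root → v j = v (parent j) - 2 * (r j * P j + x j * Q j))
    (Rc Xc : V → V → ℝ)
    (hRc : ∀ i j, Rc i j = 2 * ∑ u ∈ Finset.univ.filter (fun u => u ≠ root ∧
      s(parent u, u) ∈ (path i).edges.toFinset ∩ (path j).edges.toFinset), r u)
    (hXc : ∀ i j, Xc i j = 2 * ∑ u ∈ Finset.univ.filter (fun u => u ≠ root ∧
      s(parent u, u) ∈ (path i).edges.toFinset ∩ (path j).edges.toFinset), x u) :
    ∀ i, i ≠ root → v i = vt +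
      ∑ j ∈ Finset.univ.filter (fun j => j ≠ root), (Rc i j * p j + Xc i j * q j) := by
  classical
  open SimpleGraph Walk in
  have huniq : ∀ {a : V} (w : G.Walk root a), w.IsPath → w = path a := fun {a} w hw =>
    (hG.existsUnique_path root a).unique hw (hpath a)
  have hnots : ∀ i, i ≠ root → i ∉ (path (parent i)).support := by
    intro i hi hmem
    obtain ⟨hadj, hps⟩ := hparent i hi
    have hne : parent i ≠ i := hadj.ne
    have hteq : (path (parent i)).takeUntil i hmem = path i :=
      huniq _ ((hpath _).takeUntil hmem)
    have h1 : parent i ∈ ((path (parent i)).takeUntil i hmem).support := by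
      rw [hteq]; exact hps
    have h2 : parent i ∈ ((path (parent i)).dropUntil i hmem).support.tail := by
      have h3 := SimpleGraph.Walk.end_mem_support ((path (parent i)).dropUntil i hmem)
      rw [SimpleGraph.Walk.support_eq_cons] at h3
      rcases List.mem_cons.mp h3 with h3 | h3
      · exact absurd h3 hne
      · exact h3
    have hnd := (hpath (parent i)).support_nodup
    rw [← SimpleGraph.Walk.take_spec (path (parent i)) hmem,
      SimpleGraph.Walk.support_append] at hnd
    exact List.disjoint_of_nodup_append hnd h1 h2
  have hconcat : ∀ i (hi : i ≠ root),
      path i = ((path (parent i)).concat (hparent i hi).1) := by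
    intro i hi
    refine (huniq _ ?_).symm
    rw [SimpleGraph.Walk.isPath_def, SimpleGraph.Walk.support_concat]
    simp [List.concat_eq_append, List.nodup_append, (hpath _).support_nodup, hnots i hi]
    intro a ha h; exact hnots i hi (h ▸ ha)
  have hei_mem : ∀ i (hi : i ≠ root), s(parent i, i) ∈ (path i).edges := by
    intro i hi
    rw [hconcat i hi, SimpleGraph.Walk.edges_concat]
    simp
  have hei_not : ∀ i (hi : i ≠ root), s(parent i, i) ∉ (path (parent i)).edges := by
    intro i hi h
    exact hnots i hi (SimpleGraph.Walk.snd_mem_support_of_mem_edges _ h)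
  have hmem_edges : ∀ i (hi : i ≠ root) (e : Sym2 V),
      e ∈ (path i).edges ↔ e ∈ (path (parent i)).edges ∨ e = s(parent i, i) := by
    intro i hi e
    rw [hconcat i hi, SimpleGraph.Walk.edges_concat]
    simp
  have hsupp_edge : ∀ i (hi : i ≠ root) (l : V),
      i ∈ (path l).support ↔ s(parent i, i) ∈ (path l).edges := by
    intro i hi l
    constructor
    · intro h
      have hteq : (path l).takeUntil i h = path i := huniq _ ((hpath l).takeUntil h)
      have hm := hei_mem i hi
      rw [← hteq] at hm
      exact SimpleGraph.Walk.edges_takeUntil_subset _ h hm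
    · intro h
      exact SimpleGraph.Walk.snd_mem_support_of_mem_edges _ h
  have hedge_inj : ∀ u i, u ≠ root → i ≠ root →
      s(parent u, u) = s(parent i, i) → u = i := by
    intro u i hu hi h
    rcases Sym2.eq_iff.mp h with ⟨h1, h2⟩ | ⟨h1, h2⟩
    · exact h2
    · exfalso
      have hm := hei_mem u hu
      rw [h, h2] at hm
      exact hei_not i hi hm
  set S : V → ℝ := fun i =>
    ∑ j ∈ Finset.univ.filter (fun j => j ≠ root), (Rc i j * p j + Xc i j * q j) with hS
  suffices H : ∀ n (i : V), (path i).length = n → v i = vt + S i by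
    intro i _; exact H _ i rfl
  intro n
  induction n using Nat.strong_induction_on with
  | _ n ih =>
    intro i hlen
    by_cases hi : i = root
    · subst hi
      have hnil : path i = SimpleGraph.Walk.nil :=
        SimpleGraph.Walk.isPath_iff_eq_nil.mp (hpath i)
      have hS0 : S i = 0 := by
        simp only [hS]
        apply Finset.sum_eq_zero
        intro j _
        have hR0 : Rc i j = 0 := by
          rw [hRc]
          rw [Finset.filter_congr (q := fun _ => False) (fun u _ => by simp [hnil])]
          simp
        have hX0 : Xc i j = 0 := by
          rw [hXc]
          rw [Finset.filter_congr (q := fun _ => False) (fun u _ => by simp [hnil])]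
          simp
        rw [hR0, hX0]; ring
      rw [hS0, hv0]; ring
    · -- inductive step
      have hlenpi : (path (parent i)).length < n := by
        have := SimpleGraph.Walk.length_concat (path (parent i)) (hparent i hi).1
        rw [← hconcat i hi] at this
        omega
      have hvpi : v (parent i) = vt + S (parent i) := ih _ hlenpi _ rfl
      -- splitting of the coefficient sums
      have hAsplit : ∀ j : V,
          (Finset.univ.filter (fun u => u ≠ root ∧
            s(parent u, u) ∈ (path i).edges.toFinset ∩ (path j).edges.toFinset))
          = (if s(parent i, i) ∈ (path j).edges then
              insert i (Finset.univ.filter (fun u => u ≠ root ∧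
                s(parent u, u) ∈ (path (parent i)).edges.toFinset ∩ (path j).edges.toFinset))
            else (Finset.univ.filter (fun u => u ≠ root ∧
                s(parent u, u) ∈ (path (parent i)).edges.toFinset ∩ (path j).edges.toFinset))) := by
        intro j
        ext u
        simp only [Finset.mem_filter, Finset.mem_univ, true_and, Finset.mem_inter,
          List.mem_toFinset]
        by_cases hc : s(parent i, i) ∈ (path j).edges
        · rw [if_pos hc]
          simp only [Finset.mem_insert, Finset.mem_filter, Finset.mem_univ, true_and,
            Finset.mem_inter, List.mem_toFinset]
          constructor
          · rintro ⟨hu, h1, h2⟩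
            rcases (hmem_edges i hi _).mp h1 with h1' | h1'
            · exact Or.inr ⟨hu, h1', h2⟩
            · exact Or.inl (hedge_inj u i hu hi h1')
          · rintro (h | ⟨hu, h1, h2⟩)
            · subst h
              exact ⟨hi, hei_mem _ hi, hc⟩
            · exact ⟨hu, (hmem_edges i hi _).mpr (Or.inl h1), h2⟩
        · rw [if_neg hc]
          simp only [Finset.mem_filter, Finset.mem_univ, true_and, Finset.mem_inter,
            List.mem_toFinset]
          constructor
          · rintro ⟨hu, h1, h2⟩
            rcases (hmem_edges i hi _).mp h1 with h1' | h1'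
            · exact ⟨hu, h1', h2⟩
            · exact absurd (h1' ▸ h2) hc
          · rintro ⟨hu, h1, h2⟩
            exact ⟨hu, (hmem_edges i hi _).mpr (Or.inl h1), h2⟩
      have hinotin : ∀ j : V, i ∉ (Finset.univ.filter (fun u => u ≠ root ∧
          s(parent u, u) ∈ (path (parent i)).edges.toFinset ∩ (path j).edges.toFinset)) := by
        intro j hmem
        simp only [Finset.mem_filter, Finset.mem_univ, true_and, Finset.mem_inter,
          List.mem_toFinset] at hmem
        exact hei_not i hi hmem.2.1
      have hRsplit : ∀ j : V, Rc i j = Rc (parent i) j +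
          (if s(parent i, i) ∈ (path j).edges then 2 * r i else 0) := by
        intro j
        rw [hRc, hRc, hAsplit j]
        by_cases hc : s(parent i, i) ∈ (path j).edges
        · rw [if_pos hc, if_pos hc, Finset.sum_insert (hinotin j)]; ring
        · rw [if_neg hc, if_neg hc]; ring
      have hXsplit : ∀ j : V, Xc i j = Xc (parent i) j +
          (if s(parent i, i) ∈ (path j).edges then 2 * x i else 0) := by
        intro j
        rw [hXc, hXc, hAsplit j]
        by_cases hc : s(parent i, i) ∈ (path j).edges
        · rw [if_pos hc, if_pos hc, Finset.sum_insert (hinotin j)]; ring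
        · rw [if_neg hc, if_neg hc]; ring
      have hSsplit : S i = S (parent i)
          + (2 * r i * (∑ j ∈ Finset.univ.filter (fun j => j ≠ root ∧
              s(parent i, i) ∈ (path j).edges), p j)
          + 2 * x i * (∑ j ∈ Finset.univ.filter (fun j => j ≠ root ∧
              s(parent i, i) ∈ (path j).edges), q j)) := by
        have key : ∀ j ∈ Finset.univ.filter (fun j => j ≠ root),
            Rc i j * p j + Xc i j * q j =
            (Rc (parent i) j * p j + Xc (parent i) j * q j) +
            (if s(parent i, i) ∈ (path j).edges then 2 * r i * p j + 2 * x i * q j else 0) := by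
          intro j _
          rw [hRsplit j, hXsplit j]
          split_ifs <;> ring
        simp only [hS]
        rw [Finset.sum_congr rfl key, Finset.sum_add_distrib]
        congr 1
        rw [← Finset.sum_filter, Finset.filter_filter, Finset.sum_add_distrib,
          Finset.mul_sum, Finset.mul_sum]
      have hPmatch : (∑ j ∈ Finset.univ.filter (fun j => j ≠ root ∧
          s(parent i, i) ∈ (path j).edges), p j) = -P i := by
        rw [hP, neg_neg]
        apply Finset.sum_congr _ (fun _ _ => rfl)
        apply Finset.filter_congr
        intro l _
        simp only [hsupp_edge i hi l]
      have hQmatch : (∑ j ∈ Finset.univ.filter (fun j => j ≠ root ∧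
          s(parent i, i) ∈ (path j).edges), q j) = -Q i := by
        rw [hQ, neg_neg]
        apply Finset.sum_congr _ (fun _ _ => rfl)
        apply Finset.filter_congr
        intro l _
        simp only [hsupp_edge i hi l]
      rw [hvrec i hi, hvpi, hSsplit, hPmatch, hQmatch]
      ring
end

section
/- Let T : K → E be M-strongly monotone and L-Lipschitz on K with 0 < M ≤ L, let ε > 0, let z* ∈ K satisfy z* = Π_K(z* − εT(z*)), and let T̂ : K → E satisfy ‖T̂(z) − T(z)‖² ≤ ρ for all z ∈ K, where ρ ≥ 0. Then for every z ∈ K: ‖Π_K(z − εT̂(z)) − z*‖ ≤ √(1 + ε²L² − 2εM)·‖z − z*‖ + ε·√ρ. -/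
open scoped RealInnerProductSpace

lemma proj_inner_le {E : Type*} [NormedAddCommGroup E] [InnerProductSpace ℝ E]
    (K : Set E) (hKconv : Convex ℝ K) (proj : E → E)
    (hproj : ∀ x, proj x ∈ K ∧ ∀ y ∈ K, ‖x - proj x‖ ≤ ‖x - y‖) :
    ∀ x, ∀ y ∈ K, ⟪x - proj x, y - proj x⟫ ≤ 0 := by
  intro x y hy
  haveI : Nonempty K := ⟨⟨proj x, (hproj x).1⟩⟩
  have heq : ‖x - proj x‖ = ⨅ w : K, ‖x - w‖ := by
    refine le_antisymm (le_ciInf fun w => (hproj x).2 w w.2) ?_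
    exact ciInf_le ⟨0, fun a ⟨w, hw⟩ => hw ▸ norm_nonneg _⟩ (⟨proj x, (hproj x).1⟩ : K)
  exact (norm_eq_iInf_iff_real_inner_le_zero hKconv (hproj x).1).1 heq y hy

lemma proj_nonexpansive {E : Type*} [NormedAddCommGroup E] [InnerProductSpace ℝ E]
    (K : Set E) (hKconv : Convex ℝ K) (proj : E → E)
    (hproj : ∀ x, proj x ∈ K ∧ ∀ y ∈ K, ‖x - proj x‖ ≤ ‖x - y‖) :
    ∀ a b, ‖proj a - proj b‖ ≤ ‖a - b‖ := by
  intro a b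
  have h1 : ⟪a - proj a, proj b - proj a⟫ ≤ 0 :=
    proj_inner_le K hKconv proj hproj a (proj b) (hproj b).1
  have h2 : ⟪b - proj b, proj a - proj b⟫ ≤ 0 :=
    proj_inner_le K hKconv proj hproj b (proj a) (hproj a).1
  have key : ‖proj a - proj b‖ ^ 2 ≤ ⟪a - b, proj a - proj b⟫ := by
    have e1 : ⟪a - b, proj a - proj b⟫ - ‖proj a - proj b‖ ^ 2
        = ⟪(a - proj a) - (b - proj b), proj a - proj b⟫ := by
      rw [← real_inner_self_eq_norm_sq, ← inner_sub_left]
      congr 1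
      abel
    have e2 : ⟪(a - proj a) - (b - proj b), proj a - proj b⟫
        = ⟪a - proj a, proj a - proj b⟫ - ⟪b - proj b, proj a - proj b⟫ :=
      inner_sub_left _ _ _
    have e3 : ⟪a - proj a, proj a - proj b⟫ = -⟪a - proj a, proj b - proj a⟫ := by
      rw [← inner_neg_right]
      congr 1
      abel
    linarith [e1, e2, e3, h1, h2]
  have := key.trans (real_inner_le_norm (a - b) (proj a - proj b))
  nlinarith [norm_nonneg (proj a - proj b), norm_nonneg (a - b)]

/-- Inexact projected gradient step: if `T` is `M`-strongly monotone
and `L`-Lipschitz on `K` with `0 < M ≤ L`, `z*` is a fixed point of the exact step, and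
`‖T̂(z) − T(z)‖² ≤ ρ` on `K`, then
`‖Π_K(z − εT̂(z)) − z*‖ ≤ √(1 + ε²L² − 2εM)·‖z − z*‖ + ε√ρ` for every `z ∈ K`. -/
theorem stmt16 {E : Type*} [NormedAddCommGroup E] [InnerProductSpace ℝ E] [CompleteSpace E]
    (K : Set E) (hKne : K.Nonempty) (hKcl : IsClosed K) (hKconv : Convex ℝ K)
    (proj : E → E)
    (hproj : ∀ x, proj x ∈ K ∧ ∀ y ∈ K, ‖x - proj x‖ ≤ ‖x - y‖)
    (T That : E → E) (M L ε ρ : ℝ) (hM : 0 < M) (hML : M ≤ L)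
    (hε : 0 < ε) (hρ : 0 ≤ ρ)
    (hmono : ∀ z ∈ K, ∀ z' ∈ K, M * ‖z - z'‖ ^ 2 ≤ ⟪T z - T z', z - z'⟫)
    (hlip : ∀ z ∈ K, ∀ z' ∈ K, ‖T z - T z'‖ ≤ L * ‖z - z'‖)
    (hhat : ∀ z ∈ K, ‖That z - T z‖ ^ 2 ≤ ρ)
    (zs : E) (hzsK : zs ∈ K) (hfix : zs = proj (zs - ε • T zs)) :
    ∀ z ∈ K, ‖proj (z - ε • That z) - zs‖ ≤
      Real.sqrt (1 + ε ^ 2 * L ^ 2 - 2 * ε * M) * ‖z - zs‖ + ε * Real.sqrt ρ := by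
  intro z hz
  have hne := proj_nonexpansive K hKconv proj hproj (z - ε • That z) (zs - ε • T zs)
  rw [← hfix] at hne
  have hdec : (z - ε • That z) - (zs - ε • T zs)
      = ((z - zs) - ε • (T z - T zs)) - ε • (That z - T z) := by
    simp only [smul_sub]; abel
  have htri : ‖(z - ε • That z) - (zs - ε • T zs)‖
      ≤ ‖(z - zs) - ε • (T z - T zs)‖ + ε * ‖That z - T z‖ := by
    rw [hdec]
    calc _ ≤ ‖(z - zs) - ε • (T z - T zs)‖ + ‖ε • (That z - T z)‖ := norm_sub_le _ _
    _ = _ := by rw [norm_smul, Real.norm_eq_abs, abs_of_pos hε]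
  -- contraction bound
  have hmono' := hmono z hz zs hzsK
  have hlip' := hlip z hz zs hzsK
  have hsq : ‖(z - zs) - ε • (T z - T zs)‖ ^ 2
      ≤ (1 + ε ^ 2 * L ^ 2 - 2 * ε * M) * ‖z - zs‖ ^ 2 := by
    have hexp : ‖(z - zs) - ε • (T z - T zs)‖ ^ 2
        = ‖z - zs‖ ^ 2 - 2 * ε * ⟪T z - T zs, z - zs⟫ + ε ^ 2 * ‖T z - T zs‖ ^ 2 := by
      rw [norm_sub_sq_real, norm_smul, real_inner_smul_right, Real.norm_eq_abs,
        abs_of_pos hε, real_inner_comm]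
      ring
    have hlsq : ‖T z - T zs‖ ^ 2 ≤ L ^ 2 * ‖z - zs‖ ^ 2 := by
      nlinarith [norm_nonneg (T z - T zs), norm_nonneg (z - zs)]
    nlinarith [sq_nonneg ε]
  have hML2 : M ^ 2 ≤ L ^ 2 := by nlinarith
  have hcoef : 0 ≤ 1 + ε ^ 2 * L ^ 2 - 2 * ε * M := by
    nlinarith [sq_nonneg (1 - ε * M), mul_le_mul_of_nonneg_left hML2 (sq_nonneg ε)]
  have hcontr : ‖(z - zs) - ε • (T z - T zs)‖
      ≤ Real.sqrt (1 + ε ^ 2 * L ^ 2 - 2 * ε * M) * ‖z - zs‖ := by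
    calc ‖(z - zs) - ε • (T z - T zs)‖
        = Real.sqrt (‖(z - zs) - ε • (T z - T zs)‖ ^ 2) := by
          rw [Real.sqrt_sq (norm_nonneg _)]
      _ ≤ Real.sqrt ((1 + ε ^ 2 * L ^ 2 - 2 * ε * M) * ‖z - zs‖ ^ 2) :=
          Real.sqrt_le_sqrt hsq
      _ = _ := by
          rw [Real.sqrt_mul hcoef, Real.sqrt_sq (norm_nonneg _)]
  have hrho : ‖That z - T z‖ ≤ Real.sqrt ρ := by
    calc ‖That z - T z‖ = Real.sqrt (‖That z - T z‖ ^ 2) := by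
          rw [Real.sqrt_sq (norm_nonneg _)]
      _ ≤ Real.sqrt ρ := Real.sqrt_le_sqrt (hhat z hz)
  calc ‖proj (z - ε • That z) - zs‖ ≤ ‖(z - ε • That z) - (zs - ε • T zs)‖ := hne
    _ ≤ ‖(z - zs) - ε • (T z - T zs)‖ + ε * ‖That z - T z‖ := htri
    _ ≤ Real.sqrt (1 + ε ^ 2 * L ^ 2 - 2 * ε * M) * ‖z - zs‖ + ε * Real.sqrt ρ := by
        have := mul_le_mul_of_nonneg_left hrho hε.le
        linarith
end

section
/- Let T : K → E be M-strongly monotone and L-Lipschitz on K with 0 < M ≤ L, let z* ∈ K satisfy z* = Π_K(z* − εT(z*)), let T̂ : K → E satisfy ‖T̂(z) − T(z)‖² ≤ ρ for all z ∈ K with ρ ≥ 0, and suppose 0 < ε < 2M/L². Then the iterates z(t+1) := Π_K(z(t) − εT̂(z(t))) starting from any z(0) ∈ K satisfy limsup_{t→∞} ‖z(t) − z*‖ ≤ ε·√ρ / (1 − √(1 + ε²L² − 2εM)). -/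
open scoped RealInnerProductSpace

/-- Variational inequality for the nearest-point map. -/
lemma proj_vi {E : Type*} [NormedAddCommGroup E] [InnerProductSpace ℝ E]
    (K : Set E) (hKconv : Convex ℝ K) (proj : E → E)
    (hproj : ∀ x, proj x ∈ K ∧ ∀ y ∈ K, ‖x - proj x‖ ≤ ‖x - y‖)
    (x : E) : ∀ w ∈ K, ⟪x - proj x, w - proj x⟫ ≤ 0 := by
  have hmem := (hproj x).1
  haveI : Nonempty K := ⟨⟨proj x, hmem⟩⟩
  have hinf : ‖x - proj x‖ = ⨅ w : K, ‖x - (w : E)‖ := by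
    apply le_antisymm
    · exact le_ciInf fun w => (hproj x).2 w w.2
    · exact ciInf_le ⟨0, by rintro r ⟨w, rfl⟩; positivity⟩ (⟨proj x, hmem⟩ : K)
  exact (norm_eq_iInf_iff_real_inner_le_zero hKconv hmem).mp hinf

/-- Nonexpansiveness of the nearest-point map. -/
lemma proj_nonexp {E : Type*} [NormedAddCommGroup E] [InnerProductSpace ℝ E]
    (K : Set E) (hKconv : Convex ℝ K) (proj : E → E)
    (hproj : ∀ x, proj x ∈ K ∧ ∀ y ∈ K, ‖x - proj x‖ ≤ ‖x - y‖)
    (x y : E) : ‖proj x - proj y‖ ≤ ‖x - y‖ := by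
  set p := proj x
  set q := proj y
  have h1 : ⟪x - p, q - p⟫ ≤ 0 := proj_vi K hKconv proj hproj x q (hproj y).1
  have h2 : ⟪y - q, p - q⟫ ≤ 0 := proj_vi K hKconv proj hproj y p (hproj x).1
  have key : ‖p - q‖ ^ 2 ≤ ⟪x - y, p - q⟫ := by
    have e : ⟪x - y, p - q⟫ - ‖p - q‖ ^ 2 = -⟪x - p, q - p⟫ - ⟪y - q, p - q⟫ := by
      simp only [← real_inner_self_eq_norm_sq]
      simp only [inner_sub_left, inner_sub_right]
      ring
    nlinarith [h1, h2]
  have hle : ⟪x - y, p - q⟫ ≤ ‖x - y‖ * ‖p - q‖ := real_inner_le_norm _ _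
  rcases eq_or_lt_of_le (norm_nonneg (p - q)) with h0 | h0
  · rw [← h0]; exact norm_nonneg _
  · nlinarith [key, hle]

/-- Asymptotic tracking bound for the inexact projected gradient
iteration: under `0 < M ≤ L`, `0 < ε < 2M/L²`, and mismatch `‖T̂(z) − T(z)‖² ≤ ρ` on
`K`, the iterates `z(t+1) = Π_K(z(t) − εT̂(z(t)))` satisfy
`limsup_{t→∞} ‖z(t) − z*‖ ≤ ε√ρ / (1 − √(1 + ε²L² − 2εM))`. -/
theorem stmt17 {E : Type*} [NormedAddCommGroup E] [InnerProductSpace ℝ E] [CompleteSpace E]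
    (K : Set E) (hKne : K.Nonempty) (hKcl : IsClosed K) (hKconv : Convex ℝ K)
    (proj : E → E)
    (hproj : ∀ x, proj x ∈ K ∧ ∀ y ∈ K, ‖x - proj x‖ ≤ ‖x - y‖)
    (T That : E → E) (M L ε ρ : ℝ) (hM : 0 < M) (hML : M ≤ L)
    (hε : 0 < ε) (hεlt : ε < 2 * M / L ^ 2) (hρ : 0 ≤ ρ)
    (hmono : ∀ z ∈ K, ∀ z' ∈ K, M * ‖z - z'‖ ^ 2 ≤ ⟪T z - T z', z - z'⟫)
    (hlip : ∀ z ∈ K, ∀ z' ∈ K, ‖T z - T z'‖ ≤ L * ‖z - z'‖)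
    (hhat : ∀ z ∈ K, ‖That z - T z‖ ^ 2 ≤ ρ)
    (zs : E) (hzsK : zs ∈ K) (hfix : zs = proj (zs - ε • T zs))
    (z : ℕ → E) (hz0 : z 0 ∈ K)
    (hzrec : ∀ t, z (t + 1) = proj (z t - ε • That (z t))) :
    Filter.limsup (fun t => ‖z t - zs‖) Filter.atTop ≤
      ε * Real.sqrt ρ / (1 - Real.sqrt (1 + ε ^ 2 * L ^ 2 - 2 * ε * M)) := by
  have hL : 0 < L := lt_of_lt_of_le hM hML
  set c := Real.sqrt (1 + ε ^ 2 * L ^ 2 - 2 * ε * M) with hc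
  set b := ε * Real.sqrt ρ with hb
  have harg : 0 ≤ 1 + ε ^ 2 * L ^ 2 - 2 * ε * M := by
    nlinarith [sq_nonneg (1 - ε * M), sq_nonneg ε, mul_le_mul hML hML hM.le hL.le]
  have hc0 : 0 ≤ c := Real.sqrt_nonneg _
  have hcsq : c ^ 2 = 1 + ε ^ 2 * L ^ 2 - 2 * ε * M := Real.sq_sqrt harg
  have hεL : ε * L ^ 2 < 2 * M := by
    have := (lt_div_iff₀ (by positivity : (0:ℝ) < L ^ 2)).mp hεlt
    linarith
  have hc1 : c < 1 := by
    have : 1 + ε ^ 2 * L ^ 2 - 2 * ε * M < 1 := by nlinarith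
    calc c < Real.sqrt 1 := Real.sqrt_lt_sqrt harg this
    _ = 1 := Real.sqrt_one
  have h1c : 0 < 1 - c := by linarith
  have hb0 : 0 ≤ b := by positivity
  -- membership of iterates
  have hzK : ∀ t, z t ∈ K := by
    intro t
    induction t with
    | zero => exact hz0
    | succ n _ => rw [hzrec n]; exact (hproj _).1
  -- one-step contraction
  have key : ∀ t, ‖z (t + 1) - zs‖ ≤ c * ‖z t - zs‖ + b := by
    intro t
    have hzt := hzK t
    rw [hzrec t]
    nth_rewrite 1 [hfix]
    calc ‖proj (z t - ε • That (z t)) - proj (zs - ε • T zs)‖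
        ≤ ‖(z t - ε • That (z t)) - (zs - ε • T zs)‖ :=
          proj_nonexp K hKconv proj hproj _ _
      _ = ‖((z t - zs) - ε • (T (z t) - T zs)) + ε • (T (z t) - That (z t))‖ := by
          congr 1; simp only [smul_sub]; abel
      _ ≤ ‖(z t - zs) - ε • (T (z t) - T zs)‖ + ‖ε • (T (z t) - That (z t))‖ :=
          norm_add_le _ _
      _ ≤ c * ‖z t - zs‖ + b := by
          gcongr
          · -- contraction part
            have hsq : ‖(z t - zs) - ε • (T (z t) - T zs)‖ ^ 2
                ≤ (c * ‖z t - zs‖) ^ 2 := by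
              have e : ‖(z t - zs) - ε • (T (z t) - T zs)‖ ^ 2
                  = ‖z t - zs‖ ^ 2 - 2 * ε * ⟪T (z t) - T zs, z t - zs⟫
                    + ε ^ 2 * ‖T (z t) - T zs‖ ^ 2 := by
                rw [norm_sub_sq_real, norm_smul, real_inner_smul_right,
                  real_inner_comm]
                simp [abs_of_pos hε]; ring
              have hm := hmono (z t) hzt zs hzsK
              have hl := hlip (z t) hzt zs hzsK
              have hl2 : ‖T (z t) - T zs‖ ^ 2 ≤ L ^ 2 * ‖z t - zs‖ ^ 2 := by
                nlinarith [norm_nonneg (T (z t) - T zs), norm_nonneg (z t - zs)]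
              rw [e, mul_pow, hcsq]
              nlinarith [sq_nonneg ε]
            have := Real.sqrt_le_sqrt hsq
            rwa [Real.sqrt_sq (norm_nonneg _),
              Real.sqrt_sq (by positivity : 0 ≤ c * ‖z t - zs‖)] at this
          · rw [norm_smul, Real.norm_eq_abs, abs_of_pos hε, hb]
            gcongr
            have h := hhat (z t) hzt
            rw [← norm_neg (T (z t) - That (z t)), neg_sub]
            calc ‖That (z t) - T (z t)‖
                = Real.sqrt (‖That (z t) - T (z t)‖ ^ 2) :=
                  (Real.sqrt_sq (norm_nonneg _)).symm
              _ ≤ Real.sqrt ρ := Real.sqrt_le_sqrt h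
  -- geometric bound
  have bound : ∀ t, ‖z t - zs‖ ≤ c ^ t * ‖z 0 - zs‖ + b / (1 - c) := by
    intro t
    induction t with
    | zero => simp; positivity
    | succ n ih =>
      calc ‖z (n + 1) - zs‖ ≤ c * ‖z n - zs‖ + b := key n
        _ ≤ c * (c ^ n * ‖z 0 - zs‖ + b / (1 - c)) + b := by gcongr
        _ = c ^ (n + 1) * ‖z 0 - zs‖ + (c * (b / (1 - c)) + b) := by ring
        _ = c ^ (n + 1) * ‖z 0 - zs‖ + b / (1 - c) := by
            congr 1
            field_simp
            ring
  -- limsup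
  have htend : Filter.Tendsto (fun t => c ^ t * ‖z 0 - zs‖ + b / (1 - c))
      Filter.atTop (nhds (b / (1 - c))) := by
    have h0 : Filter.Tendsto (fun t : ℕ => c ^ t * ‖z 0 - zs‖) Filter.atTop (nhds 0) := by
      have := (tendsto_pow_atTop_nhds_zero_of_lt_one hc0 hc1).mul_const ‖z 0 - zs‖
      simpa using this
    simpa using h0.add_const (b / (1 - c))
  have hle : Filter.limsup (fun t => ‖z t - zs‖) Filter.atTop
      ≤ Filter.limsup (fun t => c ^ t * ‖z 0 - zs‖ + b / (1 - c)) Filter.atTop := by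
    refine Filter.limsup_le_limsup (Filter.Eventually.of_forall bound)
      (Filter.IsBoundedUnder.isCoboundedUnder_le
        (Filter.isBoundedUnder_of ⟨0, fun t => norm_nonneg _⟩))
      htend.isBoundedUnder_le
  calc Filter.limsup (fun t => ‖z t - zs‖) Filter.atTop
      ≤ Filter.limsup (fun t => c ^ t * ‖z 0 - zs‖ + b / (1 - c)) Filter.atTop := hle
    _ = b / (1 - c) := htend.limsup_eq
    _ = ε * Real.sqrt ρ / (1 - Real.sqrt (1 + ε ^ 2 * L ^ 2 - 2 * ε * M)) := rfl
end
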